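/- arXiv:2106.11155 — 11 statements merged into one kernel-verified Lean document; each statement's English description precedes it below -/
import Mathlib

section
/- Let f(z) = ∏_{i=1}^{n} (z - z_i) be a monic polynomial of degree n ≥ 2 over K with all roots satisfying |z_i| ≤ 1. Then for each root z_i of f there exists a root w of the derivative f' such that |z_i - w| ≤ |n|^{-1/(n-1)}, where |n| denotes the absolute value of the image of the integer n in K and the exponent is a real power. -/
/-!
At a root `z` of the monic polynomial `f = ∏ (X - zᵢ)` one has `f'(z) = ∏_{zᵢ ≠ z} (z - zᵢ)`
(one copy of `z` removed), and every factor has absolute value at most `1` by the ultrametric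
inequality, so `|f'(z)| ≤ 1`. On the other hand `f' = n ∏_{j=1}^{n-1} (X - wⱼ)` over its roots
`wⱼ`, so `|n| ∏ |z - wⱼ| ≤ 1`, and one of the `n - 1` factors `|z - wⱼ|` is at most
`|n|^{-1/(n-1)}`.
-/

open Polynomial

theorem Multiset.exists_le_of_prod_map_le_pow_card {ι R : Type*} [CommSemiring R] [LinearOrder R]
    [IsStrictOrderedRing R] {s : Multiset ι} (hs : s ≠ 0) {g : ι → R} {r : R} (hr : 0 < r)
    (h : (s.map g).prod ≤ r ^ card s) : ∃ i ∈ s, g i ≤ r := by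
  by_contra! hlt
  have := prod_map_lt_prod_map hs (fun _ ↦ r) g (fun _ _ ↦ hr) hlt
  rw [map_const', prod_replicate] at this
  exact this.not_ge h

theorem Real.rpow_neg_one_div_natCast_pow {x : ℝ} (hx : 0 ≤ x) {m : ℕ} (hm : m ≠ 0) :
    (x ^ (-(1 / (m : ℝ)))) ^ m = x⁻¹ := by
  rw [Real.rpow_neg hx, inv_pow, one_div, Real.rpow_inv_natCast_pow hx hm]

namespace IsNonarchimedean

variable {R : Type*} [CommRing R] {v : AbsoluteValue R ℝ}

theorem apply_sub_le_one (hv : IsNonarchimedean v) {x y : R} (hx : v x ≤ 1) (hy : v y ≤ 1) :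
    v (x - y) ≤ 1 := by
  rw [sub_eq_add_neg]
  exact (hv x (-y)).trans (max_le hx (by rwa [v.map_neg]))

theorem apply_eval_root_derivative_le_one [IsDomain R] (hv : IsNonarchimedean v) {f : R[X]}
    (hf : f.Splits) (hm : f.Monic) (hroots : ∀ a ∈ f.roots, v a ≤ 1) {z : R}
    (hz : z ∈ f.roots) : v (f.derivative.eval z) ≤ 1 := by
  classical
  rw [hf.eval_root_derivative hm hz, map_multiset_prod, ← one_pow (Multiset.card _)]
  refine Multiset.prod_map_le_pow_card (fun _ _ ↦ v.nonneg _) fun x hx ↦ ?_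
  obtain ⟨a, ha, rfl⟩ := Multiset.mem_map.mp hx
  exact hv.apply_sub_le_one (hroots z hz) (hroots a (Multiset.mem_of_mem_erase ha))

end IsNonarchimedean

theorem AbsoluteValue.apply_eval_of_splits {R : Type*} [CommRing R] [IsDomain R]
    (v : AbsoluteValue R ℝ) {f : R[X]} (hf : f.Splits) (z : R) :
    v (f.eval z) = v f.leadingCoeff * (f.roots.map fun w ↦ v (z - w)).prod := by
  conv_lhs => rw [hf.eq_prod_roots]
  simp [eval_multiset_prod, map_multiset_prod, Multiset.map_map]

/-- Non-archimedean Sendov: for a monic polynomial of degree `n ≥ 2` over an algebraically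
closed non-archimedean field `K` with all roots in the closed unit disk, every root of `f`
is within distance `|n|^{-1/(n-1)}` of some root of `f'`. -/
theorem nonarchimedean_sendov {K : Type*} [Field K] [IsAlgClosed K] [CharZero K]
    (v : AbsoluteValue K ℝ) (hna : IsNonarchimedean v)
    (n : ℕ) (hn : 2 ≤ n) (f : Polynomial K) (hmonic : f.Monic)
    (hdeg : f.natDegree = n) (hroots : ∀ z : K, f.IsRoot z → v z ≤ 1) :
    ∀ z : K, f.IsRoot z → ∃ w : K, (Polynomial.derivative f).IsRoot w ∧
      v (z - w) ≤ v ((n : K)) ^ (-(1 / ((n : ℝ) - 1))) := by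
  intro z hz
  set r := v (n : K) ^ (-(1 / ((n : ℝ) - 1)))
  have hvn : 0 < v (n : K) := v.pos (Nat.cast_ne_zero.mpr (by omega))
  have hr : r ^ (n - 1) = (v (n : K))⁻¹ := by
    rw [← Real.rpow_neg_one_div_natCast_pow hvn.le (by omega : n - 1 ≠ 0),
      Nat.cast_pred (by omega)]
  have hf'_card : Multiset.card f.derivative.roots = n - 1 := by
    rw [← (IsAlgClosed.splits _).natDegree_eq_card_roots, natDegree_derivative, hdeg]
  have hf'_eval : v (f.derivative.eval z) ≤ 1 :=
    hna.apply_eval_root_derivative_le_one (IsAlgClosed.splits f) hmonic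
      (fun a ha ↦ hroots a (isRoot_of_mem_roots ha)) ((mem_roots hmonic.ne_zero).mpr hz)
  rw [v.apply_eval_of_splits (IsAlgClosed.splits _), leadingCoeff_derivative,
    hmonic.leadingCoeff, hdeg, one_mul] at hf'_eval
  have hprod : (f.derivative.roots.map fun w ↦ v (z - w)).prod ≤
      r ^ Multiset.card f.derivative.roots := by
    rwa [hf'_card, hr, ← one_div, le_div_iff₀ hvn, mul_comm]
  obtain ⟨w, hw, hzw⟩ := Multiset.exists_le_of_prod_map_le_pow_card
    (Multiset.card_pos.mp (by omega)) (Real.rpow_pos_of_pos hvn _) hprod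
  exact ⟨w, isRoot_of_mem_roots hw, hzw⟩
end

section
/- Let f be a monic polynomial of degree n ≥ 2 over K all of whose roots z satisfy |z| ≤ 1. Then the derivative f' has at least one root w with |w| ≤ |n|^{-1/(n-1)}. -/
/-!
Write `f' = n · ∏ (X - wᵢ)` over its `n - 1` roots. Evaluating at `0` gives
`|n| · ∏ |wᵢ| = |f'(0)| = |f₁|`, with `f₁` the coefficient of `X` in `f`. Moreover `|f₁| ≤ 1`,
because `f = ∏ (X - z)` is a product of linear factors of Gauss norm `≤ 1` and the Gauss norm
of an ultrametric absolute value is submultiplicative. A root `w` of minimal absolute value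
then satisfies `|w|^(n-1) · |n| ≤ 1`.
-/

open Polynomial

namespace Polynomial

variable {R : Type*} [CommRing R] {v : AbsoluteValue R ℝ}

lemma gaussNorm_X_sub_C_le_one [Nontrivial R] (hna : IsNonarchimedean v) {z : R}
    (hz : v z ≤ 1) : (X - C z).gaussNorm v 1 ≤ 1 := by
  rw [sub_eq_add_neg, ← C_neg]
  refine (isNonarchimedean_gaussNorm v hna zero_le_one _ _).trans (max_le ?_ ?_)
  · simp [← monomial_one_one_eq_X]
  · rwa [gaussNorm_C, v.map_neg]

lemma gaussNorm_prod_X_sub_C_le_one [Nontrivial R] (hna : IsNonarchimedean v) {s : Multiset R}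
    (hs : ∀ z ∈ s, v z ≤ 1) : (s.map (X - C ·)).prod.gaussNorm v 1 ≤ 1 := by
  induction s using Multiset.induction_on with
  | empty => rw [Multiset.map_zero, Multiset.prod_zero, ← C_1, gaussNorm_C, v.map_one]
  | cons a s ih =>
    rw [Multiset.map_cons, Multiset.prod_cons]
    calc _ ≤ (X - C a).gaussNorm v 1 * (s.map (X - C ·)).prod.gaussNorm v 1 :=
          gaussNorm_mul_le v hna _ _ zero_le_one
      _ ≤ (1 : ℝ) * 1 :=
          mul_le_mul (gaussNorm_X_sub_C_le_one hna (hs a (Multiset.mem_cons_self a s)))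
            (ih fun z hz ↦ hs z (Multiset.mem_cons_of_mem hz)) (gaussNorm_nonneg v _ zero_le_one)
            zero_le_one
      _ = 1 := one_mul 1

lemma Splits.abv_coeff_le_one_of_monic [IsDomain R] (hna : IsNonarchimedean v) {f : R[X]}
    (hf : f.Splits) (hm : f.Monic) (hroots : ∀ z ∈ f.roots, v z ≤ 1) (i : ℕ) :
    v (f.coeff i) ≤ 1 :=
  calc v (f.coeff i) = v (f.coeff i) * 1 ^ i := by rw [one_pow, mul_one]
    _ ≤ f.gaussNorm v 1 := le_gaussNorm v f zero_le_one i
    _ = (f.roots.map (X - C ·)).prod.gaussNorm v 1 := by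
        rw [← hf.eq_prod_roots_of_monic hm]
    _ ≤ 1 := gaussNorm_prod_X_sub_C_le_one hna hroots

lemma Splits.exists_mem_roots_pow_mul_le [IsDomain R] {f : R[X]} (hf : f.Splits)
    (hdeg : f.natDegree ≠ 0) :
    ∃ w ∈ f.roots, v w ^ f.natDegree * v f.leadingCoeff ≤ v (f.coeff 0) := by
  have hcard := hf.natDegree_eq_card_roots
  obtain ⟨w, hw, hmin⟩ := Multiset.exists_min_image v
    (s := f.roots) (Multiset.card_pos.mp (by omega))
  refine ⟨w, hw, ?_⟩
  calc v w ^ f.natDegree * v f.leadingCoeff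
      = (f.roots.map fun _ ↦ v w).prod * v f.leadingCoeff := by
        rw [Multiset.map_const', Multiset.prod_replicate, hcard]
    _ ≤ (f.roots.map v).prod * v f.leadingCoeff := by
        gcongr
        exact Multiset.prod_map_le_prod_map₀ _ _ (fun _ _ ↦ v.nonneg w) hmin
    _ = v (f.coeff 0) := by
        rw [hf.coeff_zero_eq_leadingCoeff_mul_prod_roots, v.map_mul, v.map_mul, v.map_pow,
          v.map_neg, v.map_one, one_pow, one_mul, map_multiset_prod, mul_comm]

end Polynomial

lemma Real.le_rpow_neg_one_div_of_pow_mul_le_one {x a : ℝ} {m : ℕ} (hx : 0 ≤ x) (ha : 0 < a)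
    (hm : m ≠ 0) (h : x ^ m * a ≤ 1) : x ≤ a ^ (-(1 / (m : ℝ))) := by
  have hpow : x ^ m ≤ a⁻¹ := by rwa [← one_div, le_div_iff₀ ha]
  calc x = (x ^ m) ^ (m⁻¹ : ℝ) := (Real.pow_rpow_inv_natCast hx hm).symm
    _ ≤ a⁻¹ ^ (m⁻¹ : ℝ) := by gcongr
    _ = a ^ (-(1 / (m : ℝ))) := by
        rw [Real.inv_rpow ha.le, ← Real.rpow_neg ha.le, one_div]

/-- For a monic polynomial of degree `n ≥ 2` over an algebraically closed non-archimedean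
field with all roots in the closed unit disk, the derivative has a root `w` with
`|w| ≤ |n|^{-1/(n-1)}`. -/
theorem derivative_has_small_root {K : Type*} [Field K] [IsAlgClosed K] [CharZero K]
    (v : AbsoluteValue K ℝ) (hna : IsNonarchimedean v)
    (n : ℕ) (hn : 2 ≤ n) (f : Polynomial K) (hmonic : f.Monic)
    (hdeg : f.natDegree = n) (hroots : ∀ z : K, f.IsRoot z → v z ≤ 1) :
    ∃ w : K, (Polynomial.derivative f).IsRoot w ∧
      v w ≤ v ((n : K)) ^ (-(1 / ((n : ℝ) - 1))) := by
  have hdeg' : (derivative f).natDegree = n - 1 := by rw [natDegree_derivative, hdeg]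
  obtain ⟨w, hw, hwle⟩ :=
    (IsAlgClosed.splits (derivative f)).exists_mem_roots_pow_mul_le (v := v) (by omega)
  have hsmall : v w ^ (n - 1) * v (n : K) ≤ v (f.coeff 1) := by
    rwa [leadingCoeff_derivative, hmonic.leadingCoeff, hdeg, one_mul, hdeg', coeff_derivative,
      zero_add, Nat.cast_zero, zero_add, mul_one] at hwle
  have hcoeff : v (f.coeff 1) ≤ 1 :=
    (IsAlgClosed.splits f).abv_coeff_le_one_of_monic hna hmonic
      (fun z hz ↦ hroots z (isRoot_of_mem_roots hz)) 1
  refine ⟨w, isRoot_of_mem_roots hw, ?_⟩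
  rw [← Nat.cast_pred (by omega)]
  exact Real.le_rpow_neg_one_div_of_pow_mul_le_one (v.nonneg w)
    (v.pos (Nat.cast_ne_zero.mpr (by omega))) (by omega) (hsmall.trans hcoeff)
end

section
/- Let n ≥ 2 with |n| < 1 and let f(z) = z^n − z over K. Then for every root z of f and every root w of the derivative f'(z) = n z^{n−1} − 1, one has |z − w| = |n|^{-1/(n-1)} > 1. In particular, no closed unit disk centered at a root of f contains a root of f'. -/
/-!
Roots of `f` satisfy `z ^ n = z`, so `|z| ≤ 1`. Roots of `f'` satisfy `n w ^ (n - 1) = 1`, so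
`|w| = |n| ^ (-1/(n-1)) > 1` because `|n| < 1`. As `|z| < |w|`, the ultrametric inequality is an
equality: `|z - w| = |w|`.
-/

open Polynomial

theorem Real.eq_rpow_neg_inv_of_mul_pow_eq_one {x a : ℝ} {k : ℕ} (hx : 0 ≤ x) (ha : 0 < a)
    (hk : k ≠ 0) (h : a * x ^ k = 1) : x = a ^ (-(k : ℝ)⁻¹) := by
  calc x = (x ^ k) ^ (k⁻¹ : ℝ) := (Real.pow_rpow_inv_natCast hx hk).symm
    _ = a⁻¹ ^ (k⁻¹ : ℝ) := by rw [eq_inv_of_mul_eq_one_right h]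
    _ = a ^ (-(k : ℝ)⁻¹) := by rw [Real.inv_rpow ha.le, Real.rpow_neg ha.le]

theorem isRoot_X_pow_sub_X_iff {R : Type*} [CommRing R] {n : ℕ} {z : R} :
    (X ^ n - X : R[X]).IsRoot z ↔ z ^ n = z := by
  simp [sub_eq_zero]

theorem isRoot_derivative_X_pow_sub_X_iff {R : Type*} [CommRing R] {n : ℕ} {w : R} :
    (derivative (X ^ n - X : R[X])).IsRoot w ↔ (n : R) * w ^ (n - 1) = 1 := by
  simp [sub_eq_zero, derivative_X_pow]

namespace AbsoluteValue

variable {R S : Type*} [Semiring R] [Nontrivial R] [Ring S] [LinearOrder S]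
  [IsStrictOrderedRing S]

theorem apply_le_one_of_pow_eq_self (v : AbsoluteValue R S) {x : R} {n : ℕ} (hn : 2 ≤ n)
    (hx : x ^ n = x) : v x ≤ 1 := by
  by_contra! h
  exact (lt_self_pow₀ h (by omega : 1 < n)).ne' (by rw [← v.map_pow, hx])

theorem apply_eq_rpow_of_natCast_mul_pow_pred_eq_one (v : AbsoluteValue R ℝ) {n : ℕ}
    (hn : 2 ≤ n) {w : R} (hw : (n : R) * w ^ (n - 1) = 1) :
    v w = v (n : R) ^ (-(1 / ((n : ℝ) - 1))) := by
  have hn0 : (n : R) ≠ 0 := left_ne_zero_of_mul_eq_one hw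
  have hpred : ((n - 1 : ℕ) : ℝ) = n - 1 := by rw [Nat.cast_sub (by omega), Nat.cast_one]
  rw [one_div, ← hpred]
  refine Real.eq_rpow_neg_inv_of_mul_pow_eq_one (v.nonneg w) (v.pos hn0) (by omega) ?_
  rw [← v.map_pow, ← v.map_mul, hw, v.map_one]

end AbsoluteValue

theorem counterexample_pow_sub_X_general {K : Type*} [Field K] [CharZero K]
    (v : AbsoluteValue K ℝ) (hna : IsNonarchimedean v)
    (n : ℕ) (hn : 2 ≤ n) (hsmall : v ((n : K)) < 1) :
    (∀ z : K, (Polynomial.X ^ n - Polynomial.X : Polynomial K).IsRoot z →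
      ∀ w : K, (Polynomial.derivative (Polynomial.X ^ n - Polynomial.X : Polynomial K)).IsRoot w →
        v (z - w) = v ((n : K)) ^ (-(1 / ((n : ℝ) - 1)))) ∧
    1 < v ((n : K)) ^ (-(1 / ((n : ℝ) - 1))) := by
  have hexp : -(1 / ((n : ℝ) - 1)) < 0 := by
    have : (1 : ℝ) < n := by exact_mod_cast hn
    exact neg_neg_of_pos (one_div_pos.2 (by linarith))
  have hgt : 1 < v (n : K) ^ (-(1 / ((n : ℝ) - 1))) :=
    Real.one_lt_rpow_of_pos_of_lt_one_of_neg (v.pos (by exact_mod_cast (by omega : n ≠ 0)))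
      hsmall hexp
  refine ⟨fun z hz w hw => ?_, hgt⟩
  have hvz := v.apply_le_one_of_pow_eq_self hn (isRoot_X_pow_sub_X_iff.1 hz)
  have hvw := v.apply_eq_rpow_of_natCast_mul_pow_pred_eq_one hn
    (isRoot_derivative_X_pow_sub_X_iff.1 hw)
  have hlt : v z < v (-w) := by rw [map_neg_eq_map]; linarith
  rw [sub_eq_add_neg, hna.add_eq_right_of_lt hlt, map_neg_eq_map, hvw]

/-- For `n ≥ 2` with `|n| < 1`, the polynomial `f(z) = z^n - z` is a counterexample to the
direct analogue of Sendov's conjecture: every root `z` of `f` and every root `w` of `f'`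
satisfy `|z - w| = |n|^{-1/(n-1)} > 1`. -/
theorem counterexample_pow_sub_X {K : Type*} [Field K] [IsAlgClosed K] [CharZero K]
    (v : AbsoluteValue K ℝ) (hna : IsNonarchimedean v)
    (n : ℕ) (hn : 2 ≤ n) (hsmall : v ((n : K)) < 1) :
    (∀ z : K, (Polynomial.X ^ n - Polynomial.X : Polynomial K).IsRoot z →
      ∀ w : K, (Polynomial.derivative (Polynomial.X ^ n - Polynomial.X : Polynomial K)).IsRoot w →
        v (z - w) = v ((n : K)) ^ (-(1 / ((n : ℝ) - 1)))) ∧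
    1 < v ((n : K)) ^ (-(1 / ((n : ℝ) - 1))) :=
  counterexample_pow_sub_X_general v hna n hn hsmall
end

section
/- Let n ≥ 2 with |n| < 1 and let f(z) = z^n − z over K. Then I(f) = |n|^{-1/(n-1)}; that is, f attains the optimal bound of the non-archimedean Sendov theorem: the maximum over roots z of f of the minimum over roots w of f' of |z − w| equals |n|^{-1/(n-1)}. -/
open Polynomial

/-- `I(f) = max_{z : f(z)=0} min_{w : f'(w)=0} |z - w|`, expressed via `sSup`/`sInf`
(for the polynomials appearing in the statements these sets are finite and nonempty,
so `sSup`/`sInf` are the maximum/minimum). -/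
noncomputable def sendovI {K : Type*} [Field K] (v : AbsoluteValue K ℝ)
    (f : Polynomial K) : ℝ :=
  sSup ((fun z => sInf ((fun w => v (z - w)) '' {w : K | (Polynomial.derivative f).IsRoot w})) ''
    {z : K | f.IsRoot z})

/-! The roots `z` of `X ^ n - X` satisfy `|z| ≤ 1`, while every critical point `w` satisfies
`n w ^ (n - 1) = 1`, hence `|w| = |n| ^ (-1 / (n - 1)) > 1`. By the ultrametric inequality every
root is then at distance exactly `|w|` from every critical point. -/

theorem IsNonarchimedean.apply_sub_eq_right_of_lt {K : Type*} [Field K] {v : AbsoluteValue K ℝ}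
    (hna : IsNonarchimedean v) {z w : K} (h : v z < v w) : v (z - w) = v w := by
  simpa [sub_eq_add_neg] using hna.add_eq_right_of_lt (y := -w) (by simpa using h)

namespace AbsoluteValue

variable {K : Type*} [Field K] (v : AbsoluteValue K ℝ)

theorem le_one_of_pow_eq_self {z : K} {n : ℕ} (hn : 2 ≤ n) (hz : z ^ n = z) : v z ≤ 1 := by
  by_contra! h
  have : v z ^ 1 < v z ^ n := pow_lt_pow_right₀ h (by omega)
  rw [pow_one, ← map_pow, hz] at this
  exact this.false

theorem eq_rpow_of_mul_pow_eq_one {a w : K} {m : ℕ} (hm : m ≠ 0) (h : a * w ^ m = 1) :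
    v w = v a ^ (-(1 / (m : ℝ))) := by
  have hpow : v w ^ m = (v a)⁻¹ := by rw [← map_pow, ← map_inv₀, inv_eq_of_mul_eq_one_right h]
  rw [Real.rpow_neg (v.nonneg a), ← Real.inv_rpow (v.nonneg a), ← hpow, one_div,
    Real.pow_rpow_inv_natCast (v.nonneg w) hm]

end AbsoluteValue

theorem sendovI_eq_of_forall_roots {K : Type*} [Field K] (v : AbsoluteValue K ℝ) {f : K[X]}
    {r : ℝ} (hf : ∃ z, f.IsRoot z) (hf' : ∃ w, (derivative f).IsRoot w)
    (h : ∀ z w, f.IsRoot z → (derivative f).IsRoot w → v (z - w) = r) : sendovI v f = r := by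
  have image_eq : ∀ {s : Set K} (g : K → ℝ), s.Nonempty → (∀ x ∈ s, g x = r) → g '' s = {r} :=
    fun g hs hg => Set.eq_singleton_iff_nonempty_unique_mem.2
      ⟨hs.image g, by rintro _ ⟨x, hx, rfl⟩; exact hg x hx⟩
  rw [sendovI, image_eq (s := {z | f.IsRoot z}) _ hf fun z hz => ?_, csSup_singleton]
  rw [image_eq (s := {w | (derivative f).IsRoot w}) _ hf' fun w hw => h z w hz hw, csInf_singleton]

/-- For `n ≥ 2` with `|n| < 1`, the polynomial `f(z) = z^n - z` attains the optimal bound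
of the non-archimedean Sendov theorem: `I(f) = |n|^{-1/(n-1)}`. -/
theorem pow_sub_X_attains_optimal_bound {K : Type*} [Field K] [IsAlgClosed K] [CharZero K]
    (v : AbsoluteValue K ℝ) (hna : IsNonarchimedean v)
    (n : ℕ) (hn : 2 ≤ n) (hsmall : v ((n : K)) < 1) :
    sendovI v (Polynomial.X ^ n - Polynomial.X : Polynomial K)
      = v ((n : K)) ^ (-(1 / ((n : ℝ) - 1))) := by
  have hnK : (n : K) ≠ 0 := Nat.cast_ne_zero.mpr (by omega)
  have hm : ((n - 1 : ℕ) : ℝ) = n - 1 := by rw [Nat.cast_sub (by omega), Nat.cast_one]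
  have is_crit_iff : ∀ w : K, (derivative (X ^ n - X : K[X])).IsRoot w ↔ n * w ^ (n - 1) = 1 :=
    fun w => by simp [sub_eq_zero, derivative_X_pow]
  have abv_crit : ∀ w : K, (derivative (X ^ n - X : K[X])).IsRoot w →
      v w = v n ^ (-(1 / ((n : ℝ) - 1))) :=
    fun w hw => hm ▸ v.eq_rpow_of_mul_pow_eq_one (by omega) ((is_crit_iff w).1 hw)
  have one_lt : 1 < v n ^ (-(1 / ((n : ℝ) - 1))) :=
    Real.one_lt_rpow_of_pos_of_lt_one_of_neg (v.pos hnK) hsmall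
      (neg_lt_zero.2 (one_div_pos.2 (by rw [← hm]; exact_mod_cast (by omega : 0 < n - 1))))
  refine sendovI_eq_of_forall_roots v ⟨0, by simp [zero_pow (by omega : n ≠ 0)]⟩ ?_ ?_
  · obtain ⟨w, hw⟩ := IsAlgClosed.exists_pow_nat_eq (n : K)⁻¹ (by omega : 0 < n - 1)
    exact ⟨w, (is_crit_iff w).2 (by rw [hw, mul_inv_cancel₀ hnK])⟩
  · intro z w hz hw
    have hz1 : v z ≤ 1 := v.le_one_of_pow_eq_self hn (by simpa [sub_eq_zero] using hz)
    rw [hna.apply_sub_eq_right_of_lt (hz1.trans_lt (abv_crit w hw ▸ one_lt)), abv_crit w hw]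
end

section
/- Let f(z) = z^n + a_{n-1} z^{n-1} + ⋯ + a_1 z + a_0 over K with n ≥ 2, |n| < 1, and |a_i| ≤ 1 for all 0 ≤ i ≤ n−1 (equivalently, all roots of f lie in the closed unit disk). Then I(f) = |n|^{-1/(n-1)} if and only if |a_1| = 1 and, for every j with 2 ≤ j ≤ n−1, |a_j| ≤ 1 and |j|·|a_j| ≤ |n|^{(j-1)/(n-1)}. -/
open Polynomial

section Helpers

variable {K : Type*} [Field K] (v : AbsoluteValue K ℝ)

lemma na_add_eq_left (hna : IsNonarchimedean v) {a b : K} (h : v b < v a) :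
    v (a + b) = v a := by
  refine le_antisymm ((hna a b).trans (max_le le_rfl h.le)) ?_
  by_contra hlt
  push_neg at hlt
  have h2 : v a ≤ max (v (a + b)) (v b) := by
    have := hna (a + b) (-b)
    simpa using this
  exact absurd (h2.trans_lt (max_lt hlt h)) (lt_irrefl _)

lemma na_sum_lt (hna : IsNonarchimedean v) {ι : Type*} (s : Finset ι) (g : ι → K) {D : ℝ}
    (hD : 0 < D) (h : ∀ i ∈ s, v (g i) < D) : v (∑ i ∈ s, g i) < D := by
  classical
  induction s using Finset.cons_induction with
  | empty => simpa using hD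
  | cons a s ha ih =>
    rw [Finset.sum_cons]
    exact lt_of_le_of_lt (hna _ _)
      (max_lt (h a (by simp)) (ih fun i hi => h i (by simp [hi])))

lemma na_sum_le (hna : IsNonarchimedean v) {ι : Type*} (s : Finset ι) (g : ι → K) {C : ℝ}
    (hC : 0 ≤ C) (h : ∀ i ∈ s, v (g i) ≤ C) : v (∑ i ∈ s, g i) ≤ C := by
  classical
  induction s using Finset.cons_induction with
  | empty => simpa using hC
  | cons a s ha ih =>
    rw [Finset.sum_cons]
    exact le_trans (hna _ _)
      (max_le (h a (by simp)) (ih fun i hi => h i (by simp [hi])))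

lemma na_msum_le (hna : IsNonarchimedean v) (s : Multiset K) {C : ℝ} (hC : 0 ≤ C)
    (h : ∀ x ∈ s, v x ≤ C) : v s.sum ≤ C := by
  induction s using Multiset.induction with
  | empty => simpa using hC
  | cons a t ih =>
    rw [Multiset.sum_cons]
    exact le_trans (hna _ _) (max_le (h a (by simp)) (ih fun x hx => h x (by simp [hx])))

lemma na_nat_le_one (hna : IsNonarchimedean v) (m : ℕ) : v ((m : K)) ≤ 1 := by
  induction m with
  | zero => simp
  | succ k ih =>
    push_cast
    exact le_trans (hna _ _) (max_le ih (by simp))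

end Helpers

lemma mprod_ge_pow_card (s : Multiset ℝ) {R : ℝ} (hR : 0 < R)
    (h : ∀ x ∈ s, R ≤ x) : R ^ Multiset.card s ≤ s.prod := by
  induction s using Multiset.induction with
  | empty => simp
  | cons a t ih =>
    have ht := ih fun x hx => h x (by simp [hx])
    have ha := h a (by simp)
    simp only [Multiset.prod_cons, Multiset.card_cons, pow_succ']
    exact mul_le_mul ha ht (pow_pos hR _).le (hR.le.trans ha)

lemma mprod_le_pow_card (s : Multiset ℝ) {R : ℝ} (hR : 0 ≤ R)
    (h : ∀ x ∈ s, 0 ≤ x ∧ x ≤ R) : s.prod ≤ R ^ Multiset.card s := by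
  induction s using Multiset.induction with
  | empty => simp
  | cons a t ih =>
    have ht := ih fun x hx => h x (by simp [hx])
    obtain ⟨ha0, ha⟩ := h a (by simp)
    simp only [Multiset.prod_cons, Multiset.card_cons, pow_succ']
    have htprod : 0 ≤ t.prod := Multiset.prod_nonneg fun x hx => (h x (by simp [hx])).1
    exact mul_le_mul ha ht htprod hR

lemma mprod_all_eq (s : Multiset ℝ) {R : ℝ} (hR : 0 < R) (h1 : ∀ x ∈ s, R ≤ x)
    (h2 : s.prod ≤ R ^ Multiset.card s) : ∀ x ∈ s, x = R := by
  intro x hx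
  obtain ⟨t, rfl⟩ := Multiset.exists_cons_of_mem hx
  have ht : R ^ Multiset.card t ≤ t.prod :=
    mprod_ge_pow_card t hR fun y hy => h1 y (by simp [hy])
  have hxR : R ≤ x := h1 x (by simp)
  have hpos : (0:ℝ) < R ^ Multiset.card t := pow_pos hR _
  simp only [Multiset.prod_cons, Multiset.card_cons, pow_succ'] at h2
  nlinarith [hpos, ht, hxR, h2]

/-- Optimality criterion when `|n| < 1`: a monic polynomial `f` of degree `n ≥ 2` with all
coefficients in the closed unit disk satisfies `I(f) = |n|^{-1/(n-1)}` iff `|a₁| = 1` and for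
all `2 ≤ j ≤ n-1`, `|a_j| ≤ 1` and `|j|·|a_j| ≤ |n|^{(j-1)/(n-1)}`. -/
theorem optimal_bound_iff_coeff_conditions {K : Type*} [Field K] [IsAlgClosed K] [CharZero K]
    (v : AbsoluteValue K ℝ) (hna : IsNonarchimedean v)
    (n : ℕ) (hn : 2 ≤ n) (hsmall : v ((n : K)) < 1)
    (f : Polynomial K) (hmonic : f.Monic) (hdeg : f.natDegree = n)
    (hcoeff : ∀ i, i < n → v (f.coeff i) ≤ 1) :
    sendovI v f = v ((n : K)) ^ (-(1 / ((n : ℝ) - 1))) ↔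
      (v (f.coeff 1) = 1 ∧
        ∀ j : ℕ, 2 ≤ j → j ≤ n - 1 →
          v (f.coeff j) ≤ 1 ∧
          v ((j : K)) * v (f.coeff j) ≤ v ((n : K)) ^ (((j : ℝ) - 1) / ((n : ℝ) - 1))) := by
  classical
  set b : ℝ := v ((n : K)) with hbdef
  set e : ℝ := (n : ℝ) - 1 with hedef
  have he : (1:ℝ) ≤ e := by
    have h2 : (2:ℝ) ≤ (n:ℝ) := by exact_mod_cast hn
    simp only [hedef]; linarith
  have he0 : (0:ℝ) < e := lt_of_lt_of_le one_pos he
  have hnK : ((n : K)) ≠ 0 := Nat.cast_ne_zero.mpr (by omega)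
  have hb0 : (0:ℝ) < b := v.pos hnK
  set R : ℝ := b ^ (-(1/e)) with hRdef
  have hR0 : (0:ℝ) < R := Real.rpow_pos_of_pos hb0 _
  have hR1 : (1:ℝ) < R := by
    rw [hRdef, Real.one_lt_rpow_iff_of_pos hb0]
    right
    exact ⟨hsmall, by rw [neg_lt, neg_zero]; positivity⟩
  have hRpow : ∀ m : ℕ, R ^ m = b ^ (-((m:ℝ)/e)) := by
    intro m
    rw [hRdef, ← Real.rpow_natCast (b ^ (-(1/e))) m, ← Real.rpow_mul hb0.le]
    ring_nf
  have hbpow : ∀ m : ℕ, (b ^ ((1:ℝ)/e)) ^ m = b ^ ((m:ℝ)/e) := by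
    intro m
    rw [← Real.rpow_natCast (b ^ ((1:ℝ)/e)) m, ← Real.rpow_mul hb0.le]
    ring_nf
  have hcastn1 : ((n-1:ℕ):ℝ) = e := by
    rw [hedef, Nat.cast_sub (by omega : 1 ≤ n)]; push_cast; ring
  have hkey : b * R ^ (n-1) = 1 := by
    rw [hRpow, hcastn1]
    nth_rewrite 1 [show b = b ^ (1:ℝ) from (Real.rpow_one b).symm]
    rw [← Real.rpow_add hb0, show (1:ℝ) + -(e/e) = 0 by field_simp; norm_num]
    exact Real.rpow_zero b
  have hbe : b ^ ((1:ℝ)/e) * R = 1 := by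
    rw [hRdef, ← Real.rpow_add hb0, show (1:ℝ)/e + -(1/e) = 0 by ring]
    exact Real.rpow_zero b
  have hbe0 : (0:ℝ) < b ^ ((1:ℝ)/e) := Real.rpow_pos_of_pos hb0 _
  have hfne : f ≠ 0 := hmonic.ne_zero
  set g := derivative f with hgdefn
  have hfcn : f.coeff n = 1 := by rw [← hdeg]; exact hmonic.coeff_natDegree
  have hgco : ∀ j : ℕ, g.coeff j = f.coeff (j+1) * ((j+1 : ℕ) : K) := by
    intro j
    rw [hgdefn, coeff_derivative]; push_cast; ring
  have hgtop : g.coeff (n-1) = (n:K) := by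
    rw [hgco, show n - 1 + 1 = n by omega, hfcn, one_mul]
  have hgdeg : g.natDegree = n - 1 :=
    le_antisymm (by have := natDegree_derivative_le f; rw [hdeg] at this; exact this)
      (le_natDegree_of_ne_zero (by rw [hgtop]; exact hnK))
  have hgne : g ≠ 0 := fun h0 => hnK (by rw [← hgtop, h0, coeff_zero])
  have hglead : g.leadingCoeff = (n:K) := by rw [leadingCoeff, hgdeg, hgtop]
  have hsplit : Splits g := IsAlgClosed.splits g
  have hcard : Multiset.card g.roots = n - 1 := by
    rw [splits_iff_card_roots.mp hsplit, hgdeg]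
  have hgfact : g = C ((n:K)) * (g.roots.map fun a => X - C a).prod := by
    conv_lhs => rw [hsplit.eq_prod_roots]
    rw [hglead]
  have hveval : ∀ z : K, v (g.eval z) = b * ((g.roots.map fun w => v (z - w)).prod) := by
    intro z
    conv_lhs => rw [hgfact]
    rw [eval_mul, eval_C, v.map_mul, hbdef]
    congr 1
    rw [eval_multiset_prod, Multiset.map_map, map_multiset_prod v, Multiset.map_map]
    congr 1
    apply Multiset.map_congr rfl
    intro w _
    simp
  have hfc : ∀ i : ℕ, v (f.coeff i) ≤ 1 := by
    intro i
    rcases lt_trichotomy i n with h | h | h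
    · exact hcoeff i h
    · rw [h, hfcn, v.map_one]
    · rw [coeff_eq_zero_of_natDegree_lt (by omega : f.natDegree < i), v.map_zero]
      exact zero_le_one
  have hrootf : ∀ z : K, f.IsRoot z → v z ≤ 1 := by
    intro z hz
    by_contra hlt
    push_neg at hlt
    have hvz0 : (0:ℝ) < v z := lt_trans one_pos hlt
    have heval : f.eval z = ∑ i ∈ Finset.range (n+1), f.coeff i * z ^ i :=
      eval_eq_sum_range' (by omega) z
    rw [Finset.sum_range_succ] at heval
    have htop : v (f.coeff n * z ^ n) = v z ^ n := by
      rw [v.map_mul, v.map_pow, hfcn, v.map_one, one_mul]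
    have hrest : v (∑ i ∈ Finset.range n, f.coeff i * z ^ i) < v z ^ n := by
      apply na_sum_lt v hna _ _ (by positivity)
      intro i hi
      rw [Finset.mem_range] at hi
      rw [v.map_mul, v.map_pow]
      calc v (f.coeff i) * v z ^ i ≤ 1 * v z ^ i :=
            mul_le_mul_of_nonneg_right (hcoeff i hi) (by positivity)
        _ = v z ^ i := one_mul _
        _ < v z ^ n := pow_lt_pow_right₀ hlt hi
    have h0 : v (f.eval z) = v z ^ n := by
      rw [heval, add_comm, na_add_eq_left v hna (by rw [htop]; exact hrest), htop]
    rw [show f.eval z = 0 from hz, v.map_zero] at h0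
    exact absurd h0.symm (ne_of_gt (by positivity))
  have hfdeg0 : f.degree ≠ 0 := by
    rw [degree_eq_natDegree hfne, hdeg]
    exact_mod_cast (by omega : n ≠ 0)
  obtain ⟨z₀, hz₀⟩ := IsAlgClosed.exists_root f hfdeg0
  have hgdeg0 : g.degree ≠ 0 := by
    rw [degree_eq_natDegree hgne, hgdeg]
    exact_mod_cast (by omega : n - 1 ≠ 0)
  obtain ⟨w₀, hw₀⟩ := IsAlgClosed.exists_root g hgdeg0
  constructor
  · -- forward direction
    intro hI
    have hfing : {w : K | g.IsRoot w}.Finite := finite_setOf_isRoot hgne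
    have hfinf : {z : K | f.IsRoot z}.Finite := finite_setOf_isRoot hfne
    set T : K → Set ℝ := fun z => (fun w => v (z - w)) '' {w : K | g.IsRoot w} with hTdef
    set S : Set ℝ := (fun z => sInf (T z)) '' {z : K | f.IsRoot z} with hSdef
    have hfinT : ∀ z : K, (T z).Finite := fun z => hfing.image _
    have hfinS : S.Finite := hfinf.image _
    have hSne : S.Nonempty := ⟨_, ⟨z₀, hz₀, rfl⟩⟩
    have hIS : sSup S = R := hI
    have hmem : R ∈ S := by rw [← hIS]; exact Set.Nonempty.csSup_mem hSne hfinS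
    obtain ⟨z, hz, hzinf⟩ := hmem
    have hge : ∀ w : K, g.IsRoot w → R ≤ v (z - w) := by
      intro w hw
      have h1 : sInf (T z) ≤ v (z - w) := csInf_le (hfinT z).bddBelow ⟨w, hw, rfl⟩
      rw [show sInf (T z) = R from hzinf] at h1
      exact h1
    -- v (g.eval z) ≤ 1
    have hgcsmall : ∀ j : ℕ, v (g.coeff j) ≤ 1 := by
      intro j
      rw [hgco, v.map_mul]
      calc v (f.coeff (j+1)) * v (((j+1:ℕ):K)) ≤ 1 * 1 :=
            mul_le_mul (hfc (j+1)) (na_nat_le_one v hna (j+1)) (v.nonneg _) zero_le_one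
        _ = 1 := one_mul 1
    have hvez : v (g.eval z) ≤ 1 := by
      rw [eval_eq_sum_range' (show g.natDegree < n by rw [hgdeg]; omega) z]
      apply na_sum_le v hna _ _ zero_le_one
      intro j hj
      rw [v.map_mul, v.map_pow]
      calc v (g.coeff j) * v z ^ j ≤ 1 * 1 ^ j :=
            mul_le_mul (hgcsmall j) (pow_le_pow_left₀ (v.nonneg z) (hrootf z hz) j)
              (by positivity) zero_le_one
        _ = 1 := by norm_num
    have hprodle : (g.roots.map fun w => v (z - w)).prod ≤ R ^ (n-1) := by
      have h1 : b * (g.roots.map fun w => v (z - w)).prod ≤ b * R ^ (n-1) := by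
        rw [hkey, ← hveval z]
        exact hvez
      exact le_of_mul_le_mul_left h1 hb0
    have hallR : ∀ w ∈ g.roots, v (z - w) = R := by
      intro w hw
      have h1 : ∀ x ∈ (g.roots.map fun w => v (z - w)), R ≤ x := by
        intro x hx
        rw [Multiset.mem_map] at hx
        obtain ⟨w', hw', rfl⟩ := hx
        exact hge w' ((mem_roots hgne).mp hw')
      exact mprod_all_eq _ hR0 h1
        (by rw [Multiset.card_map, hcard]; exact hprodle) _
        (Multiset.mem_map_of_mem _ hw)
    have hwR : ∀ w ∈ g.roots, v w = R := by
      intro w hw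
      have h1 : v (z - w) = R := hallR w hw
      have h2 : v (w - z) = R := by rw [show w - z = -(z - w) by ring, v.map_neg, h1]
      calc v w = v ((w - z) + z) := by ring_nf
        _ = v (w - z) := na_add_eq_left v hna
            (by rw [h2]; exact lt_of_le_of_lt (hrootf z hz) hR1)
        _ = R := h2
    have hc1 : v (f.coeff 1) = 1 := by
      have h1 : g.coeff 0 = f.coeff 1 := by rw [hgco]; push_cast; ring
      have h2 : v (g.coeff 0) = 1 := by
        rw [coeff_zero_eq_eval_zero, hveval 0]
        have h3 : (g.roots.map fun w => v (0 - w)).prod = R ^ (n-1) := by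
          have hall : ∀ x ∈ (g.roots.map fun w => v (0 - w)), x = R := by
            intro x hx
            rw [Multiset.mem_map] at hx
            obtain ⟨w, hw, rfl⟩ := hx
            rw [zero_sub, v.map_neg]
            exact hwR w hw
          rw [← hcard, ← Multiset.card_map (fun w => v (0 - w)) g.roots]
          refine le_antisymm
            (mprod_le_pow_card _ hR0.le fun x hx =>
              ⟨by rw [hall x hx]; exact hR0.le, le_of_eq (hall x hx)⟩)
            (mprod_ge_pow_card _ hR0 fun x hx => ge_of_eq (hall x hx))
        rw [h3, hkey]
      rw [← h1, h2]
    refine ⟨hc1, ?_⟩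
    intro j hj2 hjn
    refine ⟨hcoeff j (by omega), ?_⟩
    have hesymm : v (g.roots.esymm (n - j)) ≤ R ^ (n - j) := by
      rw [Multiset.esymm]
      apply na_msum_le v hna _ (by positivity)
      intro x hx
      rw [Multiset.mem_map] at hx
      obtain ⟨t, ht, rfl⟩ := hx
      rw [Multiset.mem_powersetCard] at ht
      obtain ⟨hts, htc⟩ := ht
      rw [← htc, map_multiset_prod v, ← Multiset.card_map (⇑v) t]
      apply mprod_le_pow_card _ hR0.le
      intro x hx
      rw [Multiset.mem_map] at hx
      obtain ⟨w, hw, rfl⟩ := hx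
      exact ⟨v.nonneg w, le_of_eq (hwR w (Multiset.mem_of_le hts hw))⟩
    have hcoefg : v (g.coeff (j-1)) ≤ b * R ^ (n - j) := by
      have hsub : Multiset.card g.roots - (j-1) = n - j := by rw [hcard]; omega
      have hPc : g.coeff (j-1) =
          (n:K) * ((-1) ^ (n - j) * g.roots.esymm (n - j)) := by
        conv_lhs => rw [hgfact]
        rw [coeff_C_mul, Multiset.prod_X_sub_C_coeff g.roots (by rw [hcard]; omega), hsub]
      rw [hPc, v.map_mul, v.map_mul, v.map_pow, v.map_neg, v.map_one, one_pow, one_mul,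
        ← hbdef]
      exact mul_le_mul_of_nonneg_left hesymm hb0.le
    have hgcj : g.coeff (j-1) = f.coeff j * ((j:ℕ):K) := by
      rw [hgco, show j - 1 + 1 = j by omega]
    have hfinal : v (((j:ℕ):K)) * v (f.coeff j) ≤ b * R ^ (n - j) := by
      rw [mul_comm, ← v.map_mul, ← hgcj]
      exact hcoefg
    have hconv : b * R ^ (n - j) = b ^ (((j:ℝ) - 1)/e) := by
      rw [hRpow (n - j), show ((n-j:ℕ):ℝ) = (n:ℝ) - (j:ℝ) by
        rw [Nat.cast_sub (by omega : j ≤ n)]]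
      nth_rewrite 1 [show b = b ^ (1:ℝ) from (Real.rpow_one b).symm]
      rw [← Real.rpow_add hb0]
      congr 1
      rw [hedef]
      have hne : (n:ℝ) - 1 ≠ 0 := by rw [← hedef]; exact ne_of_gt he0
      rw [eq_div_iff hne, add_mul, neg_mul, div_mul_cancel₀ _ hne]; ring
    rw [hconv] at hfinal
    exact hfinal
  · -- backward direction
    rintro ⟨hc1, hcj⟩
    -- coefficient bounds for g
    have hgc : ∀ j : ℕ, j ≤ n - 1 → v (g.coeff j) ≤ b ^ ((j:ℝ)/e) := by
      intro j hj
      rcases Nat.eq_or_lt_of_le hj with hj1 | hj1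
      · rw [hj1, hgtop, ← hbdef, hcastn1, div_self (ne_of_gt he0), Real.rpow_one]
      · rcases Nat.eq_zero_or_pos j with hj0 | hj0
        · rw [hj0, hgco]
          simp [hc1]
        · -- 1 ≤ j ≤ n-2, so 2 ≤ j+1 ≤ n-1
          have h2 := (hcj (j+1) (by omega) (by omega)).2
          rw [hgco, v.map_mul]
          calc v (f.coeff (j+1)) * v (((j+1:ℕ):K))
              = v (((j+1:ℕ):K)) * v (f.coeff (j+1)) := mul_comm _ _
            _ ≤ b ^ ((((j+1:ℕ):ℝ) - 1)/e) := by exact_mod_cast h2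
            _ = b ^ ((j:ℝ)/e) := by push_cast; ring_nf
    -- all roots of g have absolute value R
    have hrootg : ∀ w : K, g.IsRoot w → v w = R := by
      intro w hw
      have hevw : g.eval w = ∑ j ∈ Finset.range n, g.coeff j * w ^ j :=
        eval_eq_sum_range' (by rw [hgdeg]; omega) w
      have hvw0 : g.eval w = 0 := hw
      rcases lt_trichotomy (v w) R with hlt | heq | hgt
      · exfalso
        have hu1 : b ^ ((1:ℝ)/e) * v w < 1 := by
          calc b ^ ((1:ℝ)/e) * v w < b ^ ((1:ℝ)/e) * R :=
                mul_lt_mul_of_pos_left hlt hbe0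
            _ = 1 := hbe
        have hbot : v (g.coeff 0 * w ^ 0) = 1 := by
          rw [pow_zero, mul_one, hgco, show (0:ℕ)+1 = 1 by rfl]
          push_cast
          rw [mul_one, hc1]
        have hrest : v (∑ j ∈ Finset.range (n-1), g.coeff (j+1) * w ^ (j+1)) < 1 := by
          apply na_sum_lt v hna _ _ one_pos
          intro j hj
          rw [Finset.mem_range] at hj
          rw [v.map_mul, v.map_pow]
          calc v (g.coeff (j+1)) * v w ^ (j+1)
              ≤ b ^ (((j+1:ℕ):ℝ)/e) * v w ^ (j+1) :=
                mul_le_mul_of_nonneg_right (hgc (j+1) (by omega)) (by positivity)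
            _ = (b ^ ((1:ℝ)/e) * v w) ^ (j+1) := by rw [mul_pow, hbpow]
            _ < 1 := pow_lt_one₀ (by positivity) hu1 (by omega)
        rw [show n = (n-1)+1 by omega, Finset.sum_range_succ'] at hevw
        have hv1 : v (g.eval w) = 1 := by
          rw [hevw, add_comm, na_add_eq_left v hna (by rw [hbot]; exact hrest), hbot]
        rw [hvw0, v.map_zero] at hv1
        exact zero_ne_one hv1
      · exact heq
      · exfalso
        have hu1 : 1 < b ^ ((1:ℝ)/e) * v w := by
          calc (1:ℝ) = b ^ ((1:ℝ)/e) * R := hbe.symm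
            _ < b ^ ((1:ℝ)/e) * v w := mul_lt_mul_of_pos_left hgt hbe0
        have hu0 : (0:ℝ) < b ^ ((1:ℝ)/e) * v w := lt_trans one_pos hu1
        have htopeq : v (g.coeff (n-1) * w ^ (n-1)) = (b ^ ((1:ℝ)/e) * v w) ^ (n-1) := by
          rw [v.map_mul, v.map_pow, hgtop, ← hbdef, mul_pow, hbpow, hcastn1,
            div_self (ne_of_gt he0), Real.rpow_one]
        have hrest : v (∑ j ∈ Finset.range (n-1), g.coeff j * w ^ j)
            < (b ^ ((1:ℝ)/e) * v w) ^ (n-1) := by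
          apply na_sum_lt v hna _ _ (by positivity)
          intro j hj
          rw [Finset.mem_range] at hj
          rw [v.map_mul, v.map_pow]
          calc v (g.coeff j) * v w ^ j
              ≤ b ^ ((j:ℝ)/e) * v w ^ j :=
                mul_le_mul_of_nonneg_right (hgc j (by omega)) (by positivity)
            _ = (b ^ ((1:ℝ)/e) * v w) ^ j := by rw [mul_pow, hbpow]
            _ < (b ^ ((1:ℝ)/e) * v w) ^ (n-1) := pow_lt_pow_right₀ hu1 hj
        rw [show n = (n-1)+1 by omega, Finset.sum_range_succ] at hevw
        have hv1 : v (g.eval w) = (b ^ ((1:ℝ)/e) * v w) ^ (n-1) := by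
          rw [hevw, add_comm, na_add_eq_left v hna (by rw [htopeq]; exact hrest), htopeq]
        rw [hvw0, v.map_zero] at hv1
        exact absurd hv1.symm (ne_of_gt (by positivity))
    -- distance from any root of f to any root of g is exactly R
    have hzw : ∀ z : K, f.IsRoot z → ∀ w : K, g.IsRoot w → v (z - w) = R := by
      intro z hz w hw
      have hvw : v w = R := hrootg w hw
      have h1 : v (-w) = R := by rw [v.map_neg, hvw]
      calc v (z - w) = v (-w + z) := by ring_nf
        _ = v (-w) := na_add_eq_left v hna (by rw [h1]; exact lt_of_le_of_lt (hrootf z hz) hR1)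
        _ = R := h1
    have hsets : ∀ z : K, f.IsRoot z →
        (fun w => v (z - w)) '' {w : K | g.IsRoot w} = {R} := by
      intro z hz
      ext y
      simp only [Set.mem_image, Set.mem_setOf_eq, Set.mem_singleton_iff]
      constructor
      · rintro ⟨w, hw, rfl⟩
        exact hzw z hz w hw
      · rintro rfl
        exact ⟨w₀, hw₀, hzw z hz w₀ hw₀⟩
    have houter : (fun z => sInf ((fun w => v (z - w)) '' {w : K | g.IsRoot w})) ''
        {z : K | f.IsRoot z} = {R} := by
      ext y
      simp only [Set.mem_image, Set.mem_setOf_eq, Set.mem_singleton_iff]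
      constructor
      · rintro ⟨z, hz, rfl⟩
        rw [hsets z hz, csInf_singleton]
      · rintro rfl
        exact ⟨z₀, hz₀, by rw [hsets z₀ hz₀, csInf_singleton]⟩
    show sSup _ = R
    rw [houter, csSup_singleton]
end

section
/- Let f be a monic polynomial of degree n ≥ 2 over K with |n| < 1 and all roots of f of absolute value ≤ 1. If I(f) = |n|^{-1/(n-1)}, then every root w of the derivative f' satisfies |w| = |n|^{-1/(n-1)}, and the coefficient a_1 of z in f satisfies |a_1| = 1. -/
open Polynomial

namespace Multiset

variable {R : Type*} [CommSemiring R] [PartialOrder R] [IsStrictOrderedRing R]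
  {s : Multiset R} {r : R}

lemma pow_card_le_prod_of_nonneg (hr : 0 ≤ r) (h : ∀ x ∈ s, r ≤ x) : r ^ card s ≤ s.prod := by
  classical
  rw [prod_eq_prod_toEnumFinset, ← card_toEnumFinset, ← Finset.prod_const]
  exact Finset.prod_le_prod (fun _ _ ↦ hr) fun p hp ↦ h p.1 (mem_of_mem_toEnumFinset hp)

lemma eq_of_prod_le_pow_card (hr : 0 < r) (h : ∀ x ∈ s, r ≤ x) (hprod : s.prod ≤ r ^ card s) :
    ∀ x ∈ s, x = r := by
  classical
  by_contra! ⟨x, hx, hxr⟩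
  refine hprod.not_gt ?_
  rw [prod_eq_prod_toEnumFinset, ← card_toEnumFinset, ← Finset.prod_const]
  refine Finset.prod_lt_prod (fun _ _ ↦ hr) (fun p hp ↦ h p.1 (mem_of_mem_toEnumFinset hp))
    ⟨(x, 0), ?_, (h x hx).lt_of_ne' hxr⟩
  simpa [mem_toEnumFinset] using count_pos.2 hx

end Multiset

namespace Polynomial

variable {R : Type*} [CommRing R] [IsDomain R] {v : AbsoluteValue R ℝ} {f : R[X]}

lemma Splits.abv_coeff_zero (hf : f.Splits) :
    v (f.coeff 0) = v f.leadingCoeff * (f.roots.map v).prod := by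
  rw [hf.coeff_zero_eq_leadingCoeff_mul_prod_roots, map_mul, map_mul, map_pow, map_neg_eq_map,
    map_one, one_pow, one_mul, map_multiset_prod]

lemma Monic.abv_coeff_one [IsAddTorsionFree R] (hf : f.Monic) (hs : (derivative f).Splits) :
    v (f.coeff 1) = v (f.natDegree : R) * ((derivative f).roots.map v).prod := by
  rw [show f.coeff 1 = (derivative f).coeff 0 by simp [coeff_derivative], hs.abv_coeff_zero,
    leadingCoeff_derivative, hf.leadingCoeff, one_mul]

lemma abv_coeff_le_one_of_forall_mem_roots (hna : IsNonarchimedean v) (hf : f.Monic)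
    (hs : f.Splits) (hroots : ∀ z ∈ f.roots, v z ≤ 1) (k : ℕ) : v (f.coeff k) ≤ 1 := by
  rcases lt_or_ge f.natDegree k with hk | hk
  · simp [coeff_eq_zero_of_natDegree_lt hk]
  have hcard : Multiset.card f.roots = f.natDegree := hs.natDegree_eq_card_roots.symm
  obtain ⟨t, -, ht, hle⟩ := hna.multiset_powerset_image_add f.roots k
  rw [coeff_eq_esymm_roots_of_card hcard hk, hf.leadingCoeff, one_mul, map_mul, map_pow,
    map_neg_eq_map, map_one, one_pow, one_mul, ← hcard, Multiset.esymm]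
  refine hle.trans (Multiset.prod_induction (fun x ↦ v x ≤ 1) t (fun a b ha hb ↦ ?_) (by simp)
    fun x hx ↦ hroots x (ht x hx))
  rw [map_mul]
  exact mul_le_one₀ ha (v.nonneg b) hb

end Polynomial

theorem exists_isRoot_forall_sendovI_le {K : Type*} [Field K] (v : AbsoluteValue K ℝ) {f : K[X]}
    (hf : f ≠ 0) (hroot : ∃ z, f.IsRoot z) :
    ∃ z, f.IsRoot z ∧ ∀ w, (derivative f).IsRoot w → sendovI v f ≤ v (z - w) := by
  obtain ⟨z, hz, hsup⟩ : sendovI v f ∈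
      (fun z ↦ sInf ((fun w ↦ v (z - w)) '' {w | (derivative f).IsRoot w})) '' {z | f.IsRoot z} :=
    Set.Nonempty.csSup_mem (Set.Nonempty.image _ hroot) ((finite_setOfPred_isRoot hf).image _)
  refine ⟨z, hz, fun w hw ↦ ?_⟩
  rw [← hsup]
  exact csInf_le ⟨0, by rintro _ ⟨_, -, rfl⟩; exact v.nonneg _⟩ ⟨w, hw, rfl⟩

lemma Real.rpow_neg_one_div_sub_one_pow {x : ℝ} (hx : 0 ≤ x) {n : ℕ} (hn : 2 ≤ n) :
    (x ^ (-(1 / ((n : ℝ) - 1)))) ^ (n - 1) = x⁻¹ := by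
  have hcast : (n : ℝ) - 1 = ((n - 1 : ℕ) : ℝ) := by rw [Nat.cast_sub (by omega), Nat.cast_one]
  rw [hcast, Real.rpow_neg hx, inv_pow, one_div, Real.rpow_inv_natCast_pow hx (by omega)]

/-- If a monic polynomial `f` of degree `n ≥ 2` with `|n| < 1` and all roots in the closed
unit disk attains the optimal bound `I(f) = |n|^{-1/(n-1)}`, then every root of `f'` has
absolute value exactly `|n|^{-1/(n-1)}` and the coefficient of `z` satisfies `|a₁| = 1`. -/
theorem optimal_bound_necessary {K : Type*} [Field K] [IsAlgClosed K] [CharZero K]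
    (v : AbsoluteValue K ℝ) (hna : IsNonarchimedean v)
    (n : ℕ) (hn : 2 ≤ n) (hsmall : v ((n : K)) < 1)
    (f : Polynomial K) (hmonic : f.Monic) (hdeg : f.natDegree = n)
    (hroots : ∀ z : K, f.IsRoot z → v z ≤ 1)
    (hopt : sendovI v f = v ((n : K)) ^ (-(1 / ((n : ℝ) - 1)))) :
    (∀ w : K, (Polynomial.derivative f).IsRoot w →
        v w = v ((n : K)) ^ (-(1 / ((n : ℝ) - 1)))) ∧
      v (f.coeff 1) = 1 := by
  set R := v (n : K) ^ (-(1 / ((n : ℝ) - 1)))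
  have hvn : 0 < v (n : K) := v.pos (Nat.cast_ne_zero.2 (by omega))
  have hn' : (2 : ℝ) ≤ n := by exact_mod_cast hn
  have hR1 : 1 < R := Real.one_lt_rpow_of_pos_of_lt_one_of_neg hvn hsmall
    (neg_neg_of_pos (one_div_pos.2 (by linarith)))
  have hRn : v (n : K) * R ^ (n - 1) = 1 := by
    rw [Real.rpow_neg_one_div_sub_one_pow hvn.le hn, mul_inv_cancel₀ hvn.ne']
  obtain ⟨z, hz, hzw⟩ := exists_isRoot_forall_sendovI_le v hmonic.ne_zero
    (IsAlgClosed.exists_root f (natDegree_pos_iff_degree_pos.1 (by omega)).ne')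
  -- `|z| ≤ 1 < R ≤ |w - z|`, so the ultrametric inequality gives `|w| = |w - z|`
  have hRw : ∀ x ∈ (derivative f).roots.map v, R ≤ x := by
    refine Multiset.forall_mem_map_iff.2 fun w hw ↦ ?_
    have hzw' : R ≤ v (w - z) := by
      rw [← v.map_sub z w, ← hopt]
      exact hzw w (isRoot_of_mem_roots hw)
    rwa [← add_sub_cancel z w, hna.add_eq_right_of_lt ((hroots z hz).trans_lt (hR1.trans_le hzw'))]
  have hcard : Multiset.card ((derivative f).roots.map v) = n - 1 := by
    rw [Multiset.card_map, ← (IsAlgClosed.splits _).natDegree_eq_card_roots, natDegree_derivative,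
      hdeg]
  have ha₁ : v (f.coeff 1) = v (n : K) * ((derivative f).roots.map v).prod :=
    hdeg ▸ hmonic.abv_coeff_one (IsAlgClosed.splits _)
  have ha₁_le : v (f.coeff 1) ≤ 1 := abv_coeff_le_one_of_forall_mem_roots hna hmonic
    (IsAlgClosed.splits f) (fun z hz ↦ hroots z (isRoot_of_mem_roots hz)) 1
  have hlow : R ^ (n - 1) ≤ ((derivative f).roots.map v).prod :=
    hcard ▸ Multiset.pow_card_le_prod_of_nonneg (by linarith) hRw
  refine ⟨fun w hw ↦ ?_, le_antisymm ha₁_le ?_⟩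
  · refine Multiset.eq_of_prod_le_pow_card (by linarith) hRw ?_ (v w)
      (Multiset.mem_map_of_mem v ((mem_roots (derivative_ne_zero.2 (by omega))).2 hw))
    rw [hcard]
    exact le_of_mul_le_mul_left (by rw [← ha₁, hRn]; exact ha₁_le) hvn
  · rw [ha₁, ← hRn]
    exact mul_le_mul_of_nonneg_left hlow hvn.le
end

section
/- Let f be a monic polynomial of degree n ≥ 2 over K with |n| < 1 and all roots of f of absolute value ≤ 1. If every root w of the derivative f' satisfies |w| = |n|^{-1/(n-1)}, then |z − w| = |n|^{-1/(n-1)} for every root z of f and every root w of f'; in particular I(f) = |n|^{-1/(n-1)}. -/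
open Polynomial

theorem IsNonarchimedean.apply_sub_eq_right_of_lt_s7 {R F α : Type*} [Semiring R] [LinearOrder R]
    [AddGroup α] [FunLike F α R] [AddGroupSeminormClass F α R] {f : F}
    (hna : IsNonarchimedean f) {x y : α} (h : f x < f y) : f (x - y) = f y := by
  rw [sub_eq_add_neg, hna.add_eq_right_of_lt (by rwa [map_neg_eq_map]), map_neg_eq_map]

theorem sendovI_eq_of_forall_isRoot {K : Type*} [Field K] (v : AbsoluteValue K ℝ)
    {f : K[X]} {c : ℝ} (hf : ∃ z, f.IsRoot z) (hf' : ∃ w, (derivative f).IsRoot w)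
    (h : ∀ z, f.IsRoot z → ∀ w, (derivative f).IsRoot w → v (z - w) = c) :
    sendovI v f = c := by
  obtain ⟨z₀, hz₀⟩ := hf
  obtain ⟨w₀, hw₀⟩ := hf'
  have hinner : ∀ z, f.IsRoot z →
      (fun w => v (z - w)) '' {w | (derivative f).IsRoot w} = {c} := fun z hz =>
    Set.eq_singleton_iff_nonempty_unique_mem.mpr
      ⟨⟨_, w₀, hw₀, rfl⟩, by rintro _ ⟨w, hw, rfl⟩; exact h z hz w hw⟩
  have houter : (fun z => sInf ((fun w => v (z - w)) '' {w | (derivative f).IsRoot w})) ''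
      {z | f.IsRoot z} = {c} :=
    Set.eq_singleton_iff_nonempty_unique_mem.mpr
      ⟨⟨_, z₀, hz₀, rfl⟩, by rintro _ ⟨z, hz, rfl⟩; simp only [hinner z hz, csInf_singleton]⟩
  rw [sendovI, houter, csSup_singleton]

theorem exists_isRoot_of_natDegree_ne_zero {K : Type*} [Field K] [IsAlgClosed K] {f : K[X]}
    (hf : f.natDegree ≠ 0) : ∃ z, f.IsRoot z :=
  IsAlgClosed.exists_root f (degree_ne_of_natDegree_ne hf)

theorem optimal_bound_sufficient_general {K : Type*} [Field K] [IsAlgClosed K] [CharZero K]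
    (v : AbsoluteValue K ℝ) (hna : IsNonarchimedean v)
    (n : ℕ) (hn : 2 ≤ n) (hsmall : v ((n : K)) < 1)
    (f : Polynomial K) (hdeg : f.natDegree = n)
    (hroots : ∀ z : K, f.IsRoot z → v z ≤ 1)
    (hcrit : ∀ w : K, (Polynomial.derivative f).IsRoot w →
        v w = v ((n : K)) ^ (-(1 / ((n : ℝ) - 1)))) :
    (∀ z : K, f.IsRoot z → ∀ w : K, (Polynomial.derivative f).IsRoot w →
        v (z - w) = v ((n : K)) ^ (-(1 / ((n : ℝ) - 1)))) ∧
      sendovI v f = v ((n : K)) ^ (-(1 / ((n : ℝ) - 1))) := by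
  have hn₀ : (n : K) ≠ 0 := Nat.cast_ne_zero.mpr (by omega)
  have hexp : -(1 / ((n : ℝ) - 1)) < 0 := by
    have : (1 : ℝ) < n := by exact_mod_cast hn
    exact neg_neg_of_pos (one_div_pos.mpr (by linarith))
  have hc : 1 < v (n : K) ^ (-(1 / ((n : ℝ) - 1))) :=
    Real.one_lt_rpow_of_pos_of_lt_one_of_neg (v.pos hn₀) hsmall hexp
  have hdist : ∀ z, f.IsRoot z → ∀ w, (derivative f).IsRoot w →
      v (z - w) = v ((n : K)) ^ (-(1 / ((n : ℝ) - 1))) := fun z hz w hw => by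
    rw [hna.apply_sub_eq_right_of_lt_s7 (by linarith [hroots z hz, hcrit w hw]), hcrit w hw]
  refine ⟨hdist, sendovI_eq_of_forall_isRoot v ?_ ?_ hdist⟩
  · exact exists_isRoot_of_natDegree_ne_zero (by omega)
  · exact exists_isRoot_of_natDegree_ne_zero (by rw [natDegree_derivative]; omega)

/-- If every root `w` of `f'` satisfies `|w| = |n|^{-1/(n-1)}` (where `f` is monic of degree
`n ≥ 2`, `|n| < 1`, all roots of `f` in the closed unit disk), then `|z - w| = |n|^{-1/(n-1)}`
for every root `z` of `f` and every root `w` of `f'`; in particular `I(f) = |n|^{-1/(n-1)}`. -/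
theorem optimal_bound_sufficient {K : Type*} [Field K] [IsAlgClosed K] [CharZero K]
    (v : AbsoluteValue K ℝ) (hna : IsNonarchimedean v)
    (n : ℕ) (hn : 2 ≤ n) (hsmall : v ((n : K)) < 1)
    (f : Polynomial K) (hmonic : f.Monic) (hdeg : f.natDegree = n)
    (hroots : ∀ z : K, f.IsRoot z → v z ≤ 1)
    (hcrit : ∀ w : K, (Polynomial.derivative f).IsRoot w →
        v w = v ((n : K)) ^ (-(1 / ((n : ℝ) - 1)))) :
    (∀ z : K, f.IsRoot z → ∀ w : K, (Polynomial.derivative f).IsRoot w →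
        v (z - w) = v ((n : K)) ^ (-(1 / ((n : ℝ) - 1)))) ∧
      sendovI v f = v ((n : K)) ^ (-(1 / ((n : ℝ) - 1))) :=
  optimal_bound_sufficient_general v hna n hn hsmall f hdeg hroots hcrit
end

section
/- Let f be a monic polynomial of degree n ≥ 2 over K with |n| = 1 and all coefficients of f in O_K. Then I(f) = 1 if and only if the reduction f̄ ∈ (O_K/m_K)[z] does NOT divide (f̄')^n in (O_K/m_K)[z], where f̄ and f̄' are the images of f and of its derivative f' under coefficientwise reduction modulo m_K. -/
/-!
Since `|n| = 1`, the polynomials `f` and `f'` have unit leading coefficients and integral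
coefficients, so all their roots lie in `O_K` (at `|z| > 1` the leading term dominates). Hence every
distance `|z - w|` from a root `z` of `f` to a root `w` of `f'` is at most `1`, and `I(f) = 1` iff
some root `z` has `|z - w| = 1` for all `w`, i.e. `|f'(z)| = |n| ∏ |z - w| = 1`, i.e.
`f̄'(z̄) ≠ 0`. Since `f` splits over `O_K`, `f̄ = ∏ (X - z̄)` has `n` linear factors, so
`f̄ ∣ (f̄')ⁿ` iff every `z̄` is a root of `f̄'`.
-/

/-- The valuation ring `O_K = {x : K | v x ≤ 1}` of a non-archimedean absolute value. -/
def valRing {K : Type*} [Field K] (v : AbsoluteValue K ℝ)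
    (hna : IsNonarchimedean v) : Subring K where
  carrier := {x : K | v x ≤ 1}
  zero_mem' := by simp
  one_mem' := by simp [v.map_one]
  add_mem' := fun {a b} ha hb => le_trans (hna a b) (max_le ha hb)
  mul_mem' := fun {a b} ha hb => by
    simp only [Set.mem_setOf_eq, v.map_mul] at *
    exact mul_le_one₀ ha (v.nonneg b) hb
  neg_mem' := fun {a} ha => by simpa [v.map_neg] using ha

/-- The maximal ideal `m_K = {x : O_K | v x < 1}` of the valuation ring. -/
def maxIdeal {K : Type*} [Field K] (v : AbsoluteValue K ℝ)
    (hna : IsNonarchimedean v) : Ideal (valRing v hna) where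
  carrier := {x : valRing v hna | v (x : K) < 1}
  zero_mem' := by simp
  add_mem' := fun {a b} ha hb => lt_of_le_of_lt (hna _ _) (max_lt ha hb)
  smul_mem' := fun c x hx => by
    simp only [Set.mem_setOf_eq, smul_eq_mul, Subring.coe_mul, v.map_mul] at *
    calc v (c : K) * v (x : K) ≤ 1 * v (x : K) :=
          mul_le_mul_of_nonneg_right c.2 (v.nonneg _)
      _ = v (x : K) := one_mul _
      _ < 1 := hx

open Polynomial

theorem Multiset.prod_map_eq_one_iff_of_le_one {R ι : Type*} [CommMonoidWithZero R]
    [PartialOrder R] [ZeroLEOneClass R] [PosMulMono R] {s : Multiset ι} {f : ι → R}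
    (h0 : ∀ i ∈ s, 0 ≤ f i) (h1 : ∀ i ∈ s, f i ≤ 1) :
    (s.map f).prod = 1 ↔ ∀ i ∈ s, f i = 1 := by
  refine ⟨fun hprod i hi => ?_, fun h => Multiset.prod_eq_one (by simpa using h)⟩
  by_contra hne
  obtain ⟨t, rfl⟩ := Multiset.exists_cons_of_mem hi
  have ht : (t.map f).prod ≤ 1 := by
    simpa using Multiset.prod_map_le_prod_map₀ f 1 (fun j hj => h0 j (Multiset.mem_cons_of_mem hj))
      (fun j hj => h1 j (Multiset.mem_cons_of_mem hj))
  rw [Multiset.map_cons, Multiset.prod_cons] at hprod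
  exact ((mul_le_of_le_one_right (h0 i hi) ht).trans_lt ((h1 i hi).lt_of_ne hne)).ne hprod

theorem csSup_image_csInf_eq_iff {α β γ : Type*} [ConditionallyCompleteLinearOrder γ]
    {S : Set α} {T : Set β} (hS : S.Finite) (hS₀ : S.Nonempty) (hT : T.Finite)
    (hT₀ : T.Nonempty) {d : α → β → γ} {c : γ} (hd : ∀ z ∈ S, ∀ w ∈ T, d z w ≤ c) :
    sSup ((fun z => sInf (d z '' T)) '' S) = c ↔ ∃ z ∈ S, ∀ w ∈ T, d z w = c := by
  have hinf_le (z : α) (w : β) (hw : w ∈ T) : sInf (d z '' T) ≤ d z w :=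
    csInf_le (hT.image _).bddBelow ⟨w, hw, rfl⟩
  constructor
  · intro h
    obtain ⟨z, hz, hzc⟩ := (hS₀.image fun z => sInf (d z '' T)).csSup_mem (hS.image _)
    refine ⟨z, hz, fun w hw => le_antisymm (hd z hz w hw) ?_⟩
    rw [← h, ← hzc]
    exact hinf_le z w hw
  · rintro ⟨z, hz, hzc⟩
    obtain ⟨w₀, hw₀⟩ := hT₀
    refine le_antisymm (csSup_le (hS₀.image _) ?_) ?_
    · rintro _ ⟨z', hz', rfl⟩
      exact (hinf_le z' w₀ hw₀).trans (hd z' hz' w₀ hw₀)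
    · calc c ≤ sInf (d z '' T) :=
            le_csInf ⟨_, w₀, hw₀, rfl⟩ (by rintro _ ⟨w, hw, rfl⟩; exact (hzc w hw).ge)
        _ ≤ _ := le_csSup (hS.image _).bddAbove ⟨z, hz, rfl⟩

theorem Polynomial.Splits.dvd_pow_natDegree_iff {R : Type*} [CommRing R] [IsDomain R]
    {g h : R[X]} (hg : g.Splits) (hm : g.Monic) :
    g ∣ h ^ g.natDegree ↔ ∀ a ∈ g.roots, h.IsRoot a := by
  constructor
  · rintro ⟨c, hc⟩ a ha
    have : (h.eval a) ^ g.natDegree = 0 := by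
      rw [← eval_pow, hc, eval_mul, (isRoot_of_mem_roots ha).eq_zero, zero_mul]
    exact eq_zero_of_pow_eq_zero this
  · intro hroots
    calc g = (g.roots.map (X - C ·)).prod := hg.eq_prod_roots_of_monic hm
      _ ∣ (g.roots.map fun _ => h).prod :=
          Multiset.prod_dvd_prod_of_dvd _ _ fun a ha => dvd_iff_isRoot.mpr (hroots a ha)
      _ = h ^ g.natDegree := by
          rw [Multiset.map_const', Multiset.prod_replicate, hg.natDegree_eq_card_roots]

section ValRing

variable {K : Type*} [Field K] {v : AbsoluteValue K ℝ} (hna : IsNonarchimedean v)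

theorem mem_valRing {x : K} : x ∈ valRing v hna ↔ v x ≤ 1 := Iff.rfl

theorem mem_maxIdeal {x : valRing v hna} : x ∈ maxIdeal v hna ↔ v (x : K) < 1 := Iff.rfl

instance isPrime_maxIdeal : (maxIdeal v hna).IsPrime := by
  refine Ideal.isPrime_iff.mpr ⟨fun h => ?_, fun {x y} hxy => ?_⟩
  · have := (mem_maxIdeal hna).mp ((Ideal.eq_top_iff_one _).mp h)
    simp at this
  · by_contra! hxy'
    simp only [mem_maxIdeal, not_lt] at hxy'
    rw [mem_maxIdeal, Subring.coe_mul, map_mul] at hxy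
    exact (one_le_mul_of_one_le_of_one_le hxy'.1 hxy'.2).not_gt hxy

theorem mk_maxIdeal_ne_zero_iff {x : valRing v hna} :
    Ideal.Quotient.mk (maxIdeal v hna) x ≠ 0 ↔ v (x : K) = 1 := by
  rw [Ne, Ideal.Quotient.eq_zero_iff_mem, mem_maxIdeal, not_lt]
  exact ⟨x.2.antisymm, fun h => h.ge⟩

theorem mem_valRing_of_isRoot {g : K[X]} (hlc : v g.leadingCoeff = 1)
    (hcoeff : ∀ i, g.coeff i ∈ valRing v hna) {z : K} (hz : g.IsRoot z) : z ∈ valRing v hna := by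
  by_contra hz1
  rw [mem_valRing, not_le] at hz1
  have hdom : ∀ j ∈ Finset.range (g.natDegree + 1), j ≠ g.natDegree →
      v (g.coeff j * z ^ j) < v (g.coeff g.natDegree * z ^ g.natDegree) := by
    intro j hj hne
    rw [map_mul, map_mul, map_pow, map_pow, coeff_natDegree, hlc, one_mul]
    calc v (g.coeff j) * v z ^ j ≤ v z ^ j := mul_le_of_le_one_left (by positivity) (hcoeff j)
      _ < v z ^ g.natDegree := pow_lt_pow_right₀ hz1 (by grind)
  have := hna.apply_sum_eq_of_lt (fun a => (v.map_neg a).symm) (Finset.self_mem_range_succ _) hdom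
  rw [← eval_eq_sum_range, hz.eq_zero, map_zero, map_mul, map_pow, coeff_natDegree, hlc,
    one_mul] at this
  exact (pow_pos (zero_lt_one.trans hz1) _).ne this

theorem mem_valRing_of_isRoot_map {p : (valRing v hna)[X]} (hlc : v (p.leadingCoeff : K) = 1)
    {z : K} (hz : (p.map (valRing v hna).subtype).IsRoot z) : z ∈ valRing v hna :=
  mem_valRing_of_isRoot hna (by rwa [leadingCoeff_map_of_injective Subtype.val_injective])
    (fun i => by rw [coeff_map]; exact (p.coeff i).2) hz

theorem abv_eval_eq_one_iff {G : K[X]} (hG : G.Splits) (hlc : v G.leadingCoeff = 1)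
    (hroots : ∀ w ∈ G.roots, w ∈ valRing v hna) {z : K} (hz : z ∈ valRing v hna) :
    v (G.eval z) = 1 ↔ ∀ w ∈ G.roots, v (z - w) = 1 := by
  rw [hG.eval_eq_prod_roots, map_mul, hlc, one_mul, map_multiset_prod, Multiset.map_map]
  exact Multiset.prod_map_eq_one_iff_of_le_one (fun w _ => v.nonneg _)
    fun w hw => (valRing v hna).sub_mem hz (hroots w hw)

theorem sendovI_eq_one_iff [IsAlgClosed K] {F : K[X]} (hF' : 0 < (derivative F).natDegree)
    (hlc : v (derivative F).leadingCoeff = 1) (hroots : ∀ z ∈ F.roots, z ∈ valRing v hna)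
    (hroots' : ∀ w ∈ (derivative F).roots, w ∈ valRing v hna) :
    sendovI v F = 1 ↔ ∃ z ∈ F.roots, v ((derivative F).eval z) = 1 := by
  have hF'0 : derivative F ≠ 0 := ne_zero_of_natDegree_gt hF'
  have hF0 : F.natDegree ≠ 0 := fun h => hF'0 (derivative_of_natDegree_zero h)
  have hroot_set {G : K[X]} (hG : G ≠ 0) : {z | G.IsRoot z} = {z | z ∈ G.roots} :=
    Set.ext fun _ => (mem_roots hG).symm
  have hroots_ne {G : K[X]} (hG : G.natDegree ≠ 0) : {z | z ∈ G.roots}.Nonempty :=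
    Multiset.exists_mem_of_ne_zero ((IsAlgClosed.splits G).roots_ne_zero hG)
  rw [sendovI, hroot_set (ne_zero_of_natDegree_gt (Nat.pos_of_ne_zero hF0)), hroot_set hF'0,
    csSup_image_csInf_eq_iff (Multiset.finite_toSet _) (hroots_ne hF0) (Multiset.finite_toSet _)
      (hroots_ne hF'.ne') fun z hz w hw => (valRing v hna).sub_mem (hroots z hz) (hroots' w hw)]
  show (∃ z ∈ F.roots, ∀ w ∈ (derivative F).roots, v (z - w) = 1) ↔ _
  exact exists_congr fun z => and_congr_right fun hz =>
    (abv_eval_eq_one_iff hna (IsAlgClosed.splits _) hlc hroots' (hroots z hz)).symm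

theorem splits_of_monic_valRing [IsAlgClosed K] {f : (valRing v hna)[X]} (hf : f.Monic) :
    f.Splits :=
  Splits.of_splits_map_of_injective Subtype.val_injective (IsAlgClosed.splits _) fun z hz =>
    ⟨⟨z, mem_valRing_of_isRoot_map hna (by simp [hf.leadingCoeff]) (isRoot_of_mem_roots hz)⟩, rfl⟩

theorem sendovI_map_eq_one_iff [IsAlgClosed K] [CharZero K] {f : (valRing v hna)[X]}
    (hf : f.Monic) (hdeg : 2 ≤ f.natDegree) (hunit : v (f.natDegree : K) = 1) :
    sendovI v (f.map (valRing v hna).subtype) = 1 ↔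
      ∃ a ∈ f.roots, v ((derivative f).eval a : valRing v hna) = 1 := by
  have hFdeg : (f.map (valRing v hna).subtype).natDegree = f.natDegree := hf.natDegree_map _
  have hlc : v (derivative (f.map (valRing v hna).subtype)).leadingCoeff = 1 := by
    rw [leadingCoeff_derivative, (hf.map _).leadingCoeff, hFdeg, one_mul, hunit]
  have hroots : (f.map (valRing v hna).subtype).roots = f.roots.map (valRing v hna).subtype :=
    (splits_of_monic_valRing hna hf).roots_map_of_injective Subtype.val_injective
  have heval (a : valRing v hna) : (derivative (f.map (valRing v hna).subtype)).eval (a : K) =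
      ((derivative f).eval a : valRing v hna) := by
    rw [derivative_map]
    exact eval_map_apply (f := (valRing v hna).subtype) a
  have hroots_mem : ∀ z ∈ (f.map (valRing v hna).subtype).roots, z ∈ valRing v hna := by
    rw [hroots]
    exact Multiset.forall_mem_map_iff.mpr fun a _ => a.2
  have hroots_mem' : ∀ w ∈ (derivative (f.map (valRing v hna).subtype)).roots,
      w ∈ valRing v hna := by
    rw [derivative_map, leadingCoeff_map_of_injective Subtype.val_injective] at hlc
    rw [derivative_map]
    exact fun w hw => mem_valRing_of_isRoot_map hna hlc (isRoot_of_mem_roots hw)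
  rw [sendovI_eq_one_iff hna (by rw [natDegree_derivative]; omega) hlc hroots_mem hroots_mem',
    hroots]
  simp only [Multiset.mem_map, exists_exists_and_eq_and, Subring.coe_subtype, heval]

theorem not_map_mk_maxIdeal_dvd_iff [IsAlgClosed K] {f : (valRing v hna)[X]} (hf : f.Monic) :
    ¬ f.map (Ideal.Quotient.mk (maxIdeal v hna)) ∣
        (derivative (f.map (Ideal.Quotient.mk (maxIdeal v hna)))) ^ f.natDegree ↔
      ∃ a ∈ f.roots, v ((derivative f).eval a : valRing v hna) = 1 := by
  have hsplit := splits_of_monic_valRing hna hf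
  have hroots : (f.map (Ideal.Quotient.mk (maxIdeal v hna))).roots =
      f.roots.map (Ideal.Quotient.mk (maxIdeal v hna)) :=
    hsplit.roots_map_of_ne_zero (hf.map _).ne_zero
  rw [← hf.natDegree_map (Ideal.Quotient.mk (maxIdeal v hna)),
    (hsplit.map _).dvd_pow_natDegree_iff (hf.map _), hroots, Multiset.forall_mem_map_iff,
    derivative_map]
  simp only [not_forall, exists_prop, IsRoot.def, eval_map_apply, mk_maxIdeal_ne_zero_iff]

end ValRing

/-- Optimality criterion when `|n| = 1`: a monic polynomial `f` of degree `n ≥ 2` with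
coefficients in `O_K` satisfies `I(f) = 1` iff the reduction `f̄` modulo the maximal ideal
does not divide `(f̄')^n` in `(O_K/m_K)[z]`. -/
theorem optimal_bound_iff_not_dvd {K : Type*} [Field K] [IsAlgClosed K] [CharZero K]
    (v : AbsoluteValue K ℝ) (hna : IsNonarchimedean v)
    (n : ℕ) (hn : 2 ≤ n) (hunit : v ((n : K)) = 1)
    (f : Polynomial (valRing v hna)) (hmonic : f.Monic) (hdeg : f.natDegree = n) :
    sendovI v (f.map (valRing v hna).subtype) = 1 ↔
      ¬ (f.map (Ideal.Quotient.mk (maxIdeal v hna)) ∣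
          (Polynomial.derivative (f.map (Ideal.Quotient.mk (maxIdeal v hna)))) ^ n) := by
  subst hdeg
  rw [sendovI_map_eq_one_iff hna hmonic hn hunit, not_map_mk_maxIdeal_dvd_iff hna hmonic]
end

section
/- Let g be a polynomial over K with all coefficients in O_K and whose leading coefficient has absolute value 1. Then the set of roots of the reduction ḡ ∈ (O_K/m_K)[z] equals the image under the reduction map O_K → O_K/m_K of the set of roots of g (all of which lie in O_K). That is, {z̄ : z ∈ K, g(z) = 0} = {α ∈ O_K/m_K : ḡ(α) = 0}. -/
open Polynomial

theorem IsNonarchimedean.apply_le_one_of_isRoot {R : Type*} [CommRing R] [Nontrivial R]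
    {v : AbsoluteValue R ℝ} (hna : IsNonarchimedean v) {p : R[X]}
    (hcoeff : ∀ i, v (p.coeff i) ≤ 1) (hlead : v p.leadingCoeff = 1) {z : R}
    (hz : p.IsRoot z) : v z ≤ 1 := by
  by_contra! hvz
  have hdominant : ∀ i ∈ Finset.range (p.natDegree + 1), i ≠ p.natDegree →
      v (p.coeff i * z ^ i) < v (p.coeff p.natDegree * z ^ p.natDegree) := by
    intro i hi hin
    have hlt : i < p.natDegree := by grind
    rw [v.map_mul, v.map_mul, coeff_natDegree, hlead, one_mul, v.map_pow, v.map_pow]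
    calc v (p.coeff i) * v z ^ i ≤ v z ^ i :=
          mul_le_of_le_one_left (pow_nonneg (v.nonneg z) i) (hcoeff i)
      _ < v z ^ p.natDegree := pow_lt_pow_right₀ hvz hlt
  have heval : v (p.eval z) = v z ^ p.natDegree := by
    rw [eval_eq_sum_range, hna.apply_sum_eq_of_lt (fun a => (v.map_neg a).symm)
      (Finset.self_mem_range_succ _) hdominant, v.map_mul, coeff_natDegree, hlead, one_mul,
      v.map_pow]
  rw [hz.eq_zero, v.map_zero] at heval
  exact (pow_pos (one_pos.trans hvz) _).ne heval

theorem Polynomial.Splits.exists_mem_roots_abv_sub_lt_one {R : Type*} [CommRing R] [IsDomain R]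
    {p : R[X]} (hp : p.Splits) (v : AbsoluteValue R ℝ) (hlead : 1 ≤ v p.leadingCoeff)
    {a : R} (ha : v (p.eval a) < 1) : ∃ r ∈ p.roots, v (a - r) < 1 := by
  by_contra! hfar
  have hone_le : 1 ≤ v (p.eval a) := by
    rw [hp.eval_eq_prod_roots, v.map_mul, map_multiset_prod, Multiset.map_map]
    exact one_le_mul_of_one_le_of_one_le hlead (Multiset.one_le_prod_map hfar)
  exact hone_le.not_gt ha

section Reduction

variable {K : Type*} [Field K] {v : AbsoluteValue K ℝ} {hna : IsNonarchimedean v}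

theorem eval_map_valRing_subtype (g : (valRing v hna)[X]) (a : valRing v hna) :
    (g.map (valRing v hna).subtype).eval (a : K) = g.eval a :=
  eval_map_apply (valRing v hna).subtype a

theorem isRoot_map_mk_maxIdeal_iff (g : (valRing v hna)[X]) (a : valRing v hna) :
    (g.map (Ideal.Quotient.mk (maxIdeal v hna))).IsRoot (Ideal.Quotient.mk _ a) ↔
      v ((g.map (valRing v hna).subtype).eval (a : K)) < 1 := by
  rw [IsRoot, eval_map_apply, Ideal.Quotient.eq_zero_iff_mem, eval_map_valRing_subtype]
  rfl

theorem isRoot_iff_isRoot_map_valRing_subtype (g : (valRing v hna)[X]) (z : valRing v hna) :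
    g.IsRoot z ↔ (g.map (valRing v hna).subtype).IsRoot (z : K) := by
  rw [IsRoot, IsRoot, eval_map_valRing_subtype, ZeroMemClass.coe_eq_zero]

end Reduction

theorem roots_of_reduction_general {K : Type*} [Field K] [IsAlgClosed K]
    (v : AbsoluteValue K ℝ) (hna : IsNonarchimedean v)
    (g : Polynomial (valRing v hna))
    (hlead : v ((g.leadingCoeff : K)) = 1) :
    (∀ z : K, (g.map (valRing v hna).subtype).IsRoot z → v z ≤ 1) ∧
    {α : valRing v hna ⧸ maxIdeal v hna |
        (g.map (Ideal.Quotient.mk (maxIdeal v hna))).IsRoot α} =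
      (fun z : valRing v hna => Ideal.Quotient.mk (maxIdeal v hna) z) ''
        {z : valRing v hna | g.IsRoot z} := by
  set G := g.map (valRing v hna).subtype
  have hGlead : v G.leadingCoeff = 1 := by
    rwa [leadingCoeff_map_of_injective Subtype.coe_injective]
  have hintegral : ∀ z : K, G.IsRoot z → v z ≤ 1 := fun z hz =>
    hna.apply_le_one_of_isRoot (fun i => by rw [coeff_map]; exact (g.coeff i).2) hGlead hz
  refine ⟨hintegral, Set.ext fun α => ⟨fun hα => ?_, ?_⟩⟩
  · obtain ⟨a, rfl⟩ := Ideal.Quotient.mk_surjective α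
    obtain ⟨r, hr, hclose⟩ := (IsAlgClosed.splits G).exists_mem_roots_abv_sub_lt_one v
      hGlead.ge ((isRoot_map_mk_maxIdeal_iff g a).mp hα)
    have hrG : G.IsRoot r := isRoot_of_mem_roots hr
    refine ⟨⟨r, hintegral r hrG⟩, (isRoot_iff_isRoot_map_valRing_subtype g _).mpr hrG, ?_⟩
    rw [Ideal.Quotient.eq]
    show v (r - a) < 1
    rwa [← v.map_neg, neg_sub]
  · rintro ⟨z, hz, rfl⟩
    exact hz.map

/-- For a polynomial `g` with coefficients in `O_K` whose leading coefficient has absolute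
value `1`: all roots of `g` in `K` lie in `O_K`, and the set of roots of the reduction
`ḡ ∈ (O_K/m_K)[z]` is exactly the image of the set of roots of `g` under reduction. -/
theorem roots_of_reduction {K : Type*} [Field K] [IsAlgClosed K] [CharZero K]
    (v : AbsoluteValue K ℝ) (hna : IsNonarchimedean v)
    (g : Polynomial (valRing v hna)) (hg : g ≠ 0)
    (hlead : v ((g.leadingCoeff : K)) = 1) :
    (∀ z : K, (g.map (valRing v hna).subtype).IsRoot z → v z ≤ 1) ∧
    {α : valRing v hna ⧸ maxIdeal v hna |
        (g.map (Ideal.Quotient.mk (maxIdeal v hna))).IsRoot α} =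
      (fun z : valRing v hna => Ideal.Quotient.mk (maxIdeal v hna) z) ''
        {z : valRing v hna | g.IsRoot z} :=
  roots_of_reduction_general v hna g hlead
end

section
/- Suppose |2| = 1 and let p ∈ K with 0 < |p| < 1. Let f(z) = z^2 + z + (1 − p^2)/4 over K. Then the roots of f are (−1 + p)/2 and (−1 − p)/2, the unique root of f' is −1/2, and I(f) = |p| < 1. In particular f does not attain the optimal bound of the non-archimedean Sendov theorem. -/
open Polynomial

theorem sendovI_eq_of_derivative_roots_eq_singleton {K : Type*} [Field K]
    (v : AbsoluteValue K ℝ) {f : K[X]} {c : K} (hc : {w : K | (derivative f).IsRoot w} = {c}) :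
    sendovI v f = sSup ((fun z => v (z - c)) '' {z : K | f.IsRoot z}) := by
  simp only [sendovI, hc, Set.image_singleton, csInf_singleton]

section Quadratic

variable {K : Type*} [Field K] [NeZero (2 : K)] (p : K)

theorem setOf_isRoot_quadratic :
    {z : K | (X ^ 2 + X + C ((1 - p ^ 2) / 4) : K[X]).IsRoot z}
      = {(-1 + p) / 2, (-1 - p) / 2} := by
  have hdiscrim : discrim 1 1 ((1 - p ^ 2) / 4) = p * p := by
    rw [discrim, show (4 : K) = 2 * 2 by norm_num]
    field_simp
    ring
  ext z
  simpa [sq] using quadratic_eq_zero_iff one_ne_zero hdiscrim z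

theorem setOf_isRoot_derivative_quadratic :
    {w : K | (derivative (X ^ 2 + X + C ((1 - p ^ 2) / 4) : K[X])).IsRoot w} = {-1 / 2} := by
  ext w
  simp only [Set.mem_ofPred_eq, IsRoot, derivative_add, derivative_X_pow, derivative_X,
    derivative_C, eval_add, eval_mul, eval_C, eval_pow, eval_X, eval_one, eval_zero,
    Set.mem_singleton_iff]
  rw [Nat.cast_ofNat, pow_one, add_zero, eq_div_iff two_ne_zero]
  constructor <;> intro h <;> linear_combination h

end Quadratic

theorem quadratic_example_general {K : Type*} [Field K]
    (v : AbsoluteValue K ℝ)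
    (h2 : v ((2 : K)) = 1) (p : K) (hp1 : v p < 1) :
    {z : K | (Polynomial.X ^ 2 + Polynomial.X
        + Polynomial.C ((1 - p ^ 2) / 4) : Polynomial K).IsRoot z}
      = {(-1 + p) / 2, (-1 - p) / 2} ∧
    {w : K | (Polynomial.derivative (Polynomial.X ^ 2 + Polynomial.X
        + Polynomial.C ((1 - p ^ 2) / 4) : Polynomial K)).IsRoot w}
      = {-1 / 2} ∧
    sendovI v (Polynomial.X ^ 2 + Polynomial.X
        + Polynomial.C ((1 - p ^ 2) / 4) : Polynomial K) = v p ∧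
    sendovI v (Polynomial.X ^ 2 + Polynomial.X
        + Polynomial.C ((1 - p ^ 2) / 4) : Polynomial K) < 1 := by
  have : NeZero (2 : K) := ⟨fun h => by simp [h] at h2⟩
  have hI : sendovI v (X ^ 2 + X + C ((1 - p ^ 2) / 4)) = v p := by
    have hhalf : v (p / 2) = v p := by rw [map_div₀, h2, div_one]
    rw [sendovI_eq_of_derivative_roots_eq_singleton v (setOf_isRoot_derivative_quadratic p),
      setOf_isRoot_quadratic, Set.image_pair]
    have e1 : (-1 + p) / 2 - -1 / 2 = p / 2 := by ring
    have e2 : (-1 - p) / 2 - -1 / 2 = -(p / 2) := by ring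
    rw [e1, e2, AbsoluteValue.map_neg, hhalf, Set.pair_eq_singleton, csSup_singleton]
  exact ⟨setOf_isRoot_quadratic p, setOf_isRoot_derivative_quadratic p, hI, hI ▸ hp1⟩

/-- Example: if `|2| = 1` and `0 < |p| < 1`, then `f(z) = z² + z + (1 - p²)/4` has roots
`(-1 + p)/2` and `(-1 - p)/2`, its derivative has unique root `-1/2`, and
`I(f) = |p| < 1`, so `f` does not attain the optimal bound. -/
theorem quadratic_example {K : Type*} [Field K] [IsAlgClosed K] [CharZero K]
    (v : AbsoluteValue K ℝ) (hna : IsNonarchimedean v)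
    (h2 : v ((2 : K)) = 1) (p : K) (hp0 : 0 < v p) (hp1 : v p < 1) :
    {z : K | (Polynomial.X ^ 2 + Polynomial.X
        + Polynomial.C ((1 - p ^ 2) / 4) : Polynomial K).IsRoot z}
      = {(-1 + p) / 2, (-1 - p) / 2} ∧
    {w : K | (Polynomial.derivative (Polynomial.X ^ 2 + Polynomial.X
        + Polynomial.C ((1 - p ^ 2) / 4) : Polynomial K)).IsRoot w}
      = {-1 / 2} ∧
    sendovI v (Polynomial.X ^ 2 + Polynomial.X
        + Polynomial.C ((1 - p ^ 2) / 4) : Polynomial K) = v p ∧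
    sendovI v (Polynomial.X ^ 2 + Polynomial.X
        + Polynomial.C ((1 - p ^ 2) / 4) : Polynomial K) < 1 :=
  quadratic_example_general v h2 p hp1
end

section
/- Let f be a monic polynomial of degree n ≥ 2 over K all of whose roots z satisfy |z| ≤ 1, and let z_1 be any root of f. If every root w of f' satisfies |z_1 − w| > |n|^{-1/(n-1)}, then |f'(z_1)| > 1; but also |f'(z_1)| = ∏_{z root of f, z ≠ z_1 (with multiplicity)} |z_1 − z| ≤ 1, a contradiction. Formally: it is impossible that all roots w of f' satisfy |z_1 − w| > |n|^{-1/(n-1)}. -/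
/-!
Write `f'(z₁) = n ∏ (z₁ - w)` over the roots `w` of `f'`. If every `|z₁ - w|` exceeds
`c = |n|^{-1/(n-1)}`, then `|f'(z₁)| > |n| c^{n-1} = 1`. On the other hand
`f'(z₁) = ∏ (z₁ - z)` over the other roots `z` of `f`, and by the ultrametric inequality each
factor has absolute value at most `1`.
-/

open Polynomial

lemma Real.mul_rpow_neg_one_div_pow_eq_one {a : ℝ} (ha : 0 < a) {k : ℕ} (hk : k ≠ 0) :
    a * (a ^ (-(1 / (k : ℝ)))) ^ k = 1 := by
  rw [Real.rpow_neg ha.le, inv_pow, one_div, Real.rpow_inv_natCast_pow ha.le hk,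
    mul_inv_cancel₀ ha.ne']

namespace AbsoluteValue

variable {R : Type*} [Ring R] {v : AbsoluteValue R ℝ}

lemma apply_sub_le_max_of_isNonarchimedean (hna : IsNonarchimedean v) (x y : R) :
    v (x - y) ≤ max (v x) (v y) := by
  simpa only [sub_eq_add_neg, v.map_neg] using hna x (-y)

end AbsoluteValue

namespace Polynomial

variable {K : Type*} [Field K] {v : AbsoluteValue K ℝ} {f : K[X]}

theorem Splits.abv_eval_eq (hf : f.Splits) (z : K) :
    v (f.eval z) = v f.leadingCoeff * (f.roots.map fun w ↦ v (z - w)).prod := by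
  rw [hf.eval_eq_prod_roots, map_mul, map_multiset_prod, Multiset.map_map]
  rfl

theorem Splits.abv_leadingCoeff_mul_pow_lt_abv_eval (hf : f.Splits) (hdeg : f.natDegree ≠ 0)
    {c : ℝ} (hc : 0 < c) {z : K} (hfar : ∀ w, f.IsRoot w → c < v (z - w)) :
    v f.leadingCoeff * c ^ f.natDegree < v (f.eval z) := by
  have hf0 : f ≠ 0 := by rintro rfl; exact hdeg natDegree_zero
  have hcard : Multiset.card f.roots = f.natDegree := splits_iff_card_roots.mp hf
  have hroots : f.roots ≠ 0 := by rw [← Multiset.card_pos, hcard]; omega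
  have hprod : c ^ f.natDegree < (f.roots.map fun w ↦ v (z - w)).prod := by
    rw [← hcard, ← Multiset.prod_replicate, ← Multiset.map_const']
    exact Multiset.prod_map_lt_prod_map hroots _ _ (fun _ _ ↦ hc)
      (fun w hw ↦ hfar w (isRoot_of_mem_roots hw))
  rw [hf.abv_eval_eq]
  exact mul_lt_mul_of_pos_left hprod (v.pos (leadingCoeff_ne_zero.mpr hf0))

theorem Splits.abv_eval_derivative_root_le_one (hna : IsNonarchimedean v) (hf : f.Splits)
    (hmonic : f.Monic) (hroots : ∀ z, f.IsRoot z → v z ≤ 1) {z₁ : K} (hz₁ : f.IsRoot z₁) :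
    v (f.derivative.eval z₁) ≤ 1 := by
  classical
  have hz₁_mem : z₁ ∈ f.roots := (mem_roots hmonic.ne_zero).mpr hz₁
  rw [hf.eval_root_derivative hmonic hz₁_mem, map_multiset_prod, ← one_pow (Multiset.card _)]
  refine Multiset.prod_map_le_pow_card (fun _ _ ↦ v.nonneg _) fun x hx ↦ ?_
  obtain ⟨z, hz, rfl⟩ := Multiset.mem_map.mp hx
  have hz_root : f.IsRoot z := isRoot_of_mem_roots (Multiset.mem_of_mem_erase hz)
  exact (v.apply_sub_le_max_of_isNonarchimedean hna z₁ z).trans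
    (max_le (hroots z₁ hz₁) (hroots z hz_root))

end Polynomial

/-- Key step of the non-archimedean Sendov theorem: for a monic polynomial `f` of degree
`n ≥ 2` with all roots in the closed unit disk and a root `z₁` of `f`, it is impossible
that every root `w` of `f'` satisfies `|z₁ - w| > |n|^{-1/(n-1)}`. -/
theorem sendov_key_contradiction {K : Type*} [Field K] [IsAlgClosed K] [CharZero K]
    (v : AbsoluteValue K ℝ) (hna : IsNonarchimedean v)
    (n : ℕ) (hn : 2 ≤ n) (f : Polynomial K) (hmonic : f.Monic)
    (hdeg : f.natDegree = n) (hroots : ∀ z : K, f.IsRoot z → v z ≤ 1)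
    (z₁ : K) (hz₁ : f.IsRoot z₁) :
    ¬ ∀ w : K, (Polynomial.derivative f).IsRoot w →
        v ((n : K)) ^ (-(1 / ((n : ℝ) - 1))) < v (z₁ - w) := by
  intro hfar
  have hvn : 0 < v (n : K) := v.pos (Nat.cast_ne_zero.mpr (by omega))
  have hdeg' : f.derivative.natDegree = n - 1 := by rw [natDegree_derivative, hdeg]
  have hexp : (n : ℝ) - 1 = ((n - 1 : ℕ) : ℝ) := by push_cast [Nat.cast_sub (by omega : 1 ≤ n)]; rfl
  have hlower := (IsAlgClosed.splits f.derivative).abv_leadingCoeff_mul_pow_lt_abv_eval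
    (by omega) (Real.rpow_pos_of_pos hvn _) hfar
  rw [leadingCoeff_derivative, hmonic.leadingCoeff, one_mul, hdeg', hdeg, hexp,
    Real.mul_rpow_neg_one_div_pow_eq_one hvn (by omega)] at hlower
  have hupper := (IsAlgClosed.splits f).abv_eval_derivative_root_le_one hna hmonic hroots hz₁
  exact hlower.not_ge hupper
end
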